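/- arXiv:0712.4294 — 6 statements merged into one kernel-verified Lean document; each statement's English description precedes it below -/
import Mathlib

section
/- Let d ≥ 3 and 1 ≤ i ≠ j ≤ d. Then the elementary matrix E_{ij}(1) is a U1-element of SL(d,ℤ): there exists a constant C > 0 such that for every integer n, the word length of E_{ij}(1)ⁿ = E_{ij}(n) with respect to the generating set {E_{kl}(1) : 1 ≤ k ≠ l ≤ d} is at most C·log(|n| + 1). -/
/-- The word length of `g` with respect to a generating set `S`:
the least `n` such that `g` is a product of `n` elements of `S ∪ S⁻¹`. -/
noncomputable def wordLength {G : Type*} [Group G] (S : Set G) (g : G) : ℕ :=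
  sInf {n | ∃ l : List G, (∀ x ∈ l, x ∈ S ∪ S⁻¹) ∧ l.length = n ∧ l.prod = g}

/-- The set of elementary matrices `E k l 1` (`k ≠ l`) in `SL(d, ℤ)`. -/
def elemGens (d : ℕ) : Set (Matrix.SpecialLinearGroup (Fin d) ℤ) :=
  {γ | ∃ k l : Fin d, k ≠ l ∧ (γ : Matrix (Fin d) (Fin d) ℤ) = Matrix.transvection k l 1}

/-- The elementary matrix `E i j 1` as an element of `SL(d, ℤ)`. -/
def elemSL {d : ℕ} (i j : Fin d) (hij : i ≠ j) : Matrix.SpecialLinearGroup (Fin d) ℤ :=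
  ⟨Matrix.transvection i j 1, Matrix.det_transvection_of_ne i j hij 1⟩

/-!
Pick `k ∉ {i, j}`. Then `X = E_ij` and `Y = E_kj` commute, and conjugation by `g = E_ik E_ki` acts on
`X ^ x * Y ^ y` as Arnold's cat map `(x, y) ↦ (2x + y, x + y)`, whose eigenvalues are `φ ^ 2` and
`φ ^ (-2)`. A vector whose contracting coordinate is bounded and whose expanding coordinate is at most
`φ ^ (2N)` is `(r, 0) + catMap w` with a digit `|r| ≤ 2` and `w` of the same kind for `N - 1`, so it
costs `O(N)` letters (Horner's scheme). The vector `(n, 0)` is brought into this form by applying the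
cat map `T ≈ log |n|` times, i.e. by conjugating with `g ^ T`.
-/
section WordLength

variable {G : Type*} [Group G] {S : Set G}

def WordLengthLE (S : Set G) (g : G) (n : ℕ) : Prop :=
  ∃ l : List G, (∀ x ∈ l, x ∈ S ∪ S⁻¹) ∧ l.length ≤ n ∧ l.prod = g

namespace WordLengthLE

theorem wordLength_le {g : G} {n : ℕ} (h : WordLengthLE S g n) : wordLength S g ≤ n := by
  obtain ⟨l, hl, hlen, rfl⟩ := h
  exact (Nat.sInf_le ⟨l, hl, rfl, rfl⟩ : wordLength S l.prod ≤ l.length).trans hlen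

theorem one : WordLengthLE S (1 : G) 0 := ⟨[], by simp, le_rfl, List.prod_nil⟩

theorem of_mem {g : G} (h : g ∈ S ∪ S⁻¹) : WordLengthLE S g 1 :=
  ⟨[g], by simpa using h, le_rfl, List.prod_singleton⟩

theorem mono {g : G} {m n : ℕ} (hg : WordLengthLE S g m) (h : m ≤ n) : WordLengthLE S g n :=
  let ⟨l, hl, hlen, hprod⟩ := hg
  ⟨l, hl, hlen.trans h, hprod⟩

theorem mul {g h : G} {m n : ℕ} (hg : WordLengthLE S g m) (hh : WordLengthLE S h n) :
    WordLengthLE S (g * h) (m + n) := by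
  obtain ⟨l, hl, hlen, rfl⟩ := hg
  obtain ⟨l', hl', hlen', rfl⟩ := hh
  refine ⟨l ++ l', fun x hx => ?_, by simpa using add_le_add hlen hlen', List.prod_append⟩
  exact (List.mem_append.1 hx).elim (hl x) (hl' x)

theorem inv {g : G} {n : ℕ} (hg : WordLengthLE S g n) : WordLengthLE S g⁻¹ n := by
  obtain ⟨l, hl, hlen, rfl⟩ := hg
  refine ⟨(l.map (·⁻¹)).reverse, ?_, by simpa using hlen, (List.prod_inv_reverse l).symm⟩
  simp only [List.mem_reverse, List.mem_map, forall_exists_index, and_imp]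
  rintro _ x hx rfl
  have : (S ∪ S⁻¹)⁻¹ = S ∪ S⁻¹ := by rw [Set.union_inv, inv_inv, Set.union_comm]
  exact this ▸ Set.inv_mem_inv.2 (hl x hx)

theorem pow {g : G} {m : ℕ} (hg : WordLengthLE S g m) (k : ℕ) :
    WordLengthLE S (g ^ k) (m * k) := by
  induction k with
  | zero => simpa using one
  | succ k ih => simpa [pow_succ, mul_add] using ih.mul hg

theorem zpow_of_mem {g : G} (h : g ∈ S ∪ S⁻¹) (z : ℤ) : WordLengthLE S (g ^ z) z.natAbs := by
  obtain ⟨k, rfl | rfl⟩ := Int.eq_nat_or_neg z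
  · simpa using (of_mem h).pow k
  · simpa using ((of_mem h).pow k).inv

theorem conj {w g : G} {k n : ℕ} (hw : WordLengthLE S w k) (hg : WordLengthLE S g n) :
    WordLengthLE S (w * g * w⁻¹) (n + 2 * k) :=
  ((hw.mul hg).mul hw.inv).mono (by omega)

end WordLengthLE

end WordLength

section CatMap

open Real
open scoped goldenRatio

def catMap (v : ℤ × ℤ) : ℤ × ℤ := (2 * v.1 + v.2, v.1 + v.2)

noncomputable def expCoord (v : ℤ × ℤ) : ℝ := φ * v.1 + v.2

noncomputable def conCoord (v : ℤ × ℤ) : ℝ := v.1 - φ * v.2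

/- `φ` is a reducible abbreviation of `(1 + √5) / 2`, which `ring` would unfold; it is generalized
to an atom `a` with `a ^ 2 = a + 1` first. -/

theorem expCoord_catMap (v : ℤ × ℤ) : expCoord (catMap v) = φ ^ 2 * expCoord v := by
  simp only [expCoord, catMap]
  push_cast
  have h := goldenRatio_sq
  generalize φ = a at h ⊢
  linear_combination -((a + 1) * v.1 + v.2) * h

theorem sq_mul_conCoord_catMap (v : ℤ × ℤ) : φ ^ 2 * conCoord (catMap v) = conCoord v := by
  simp only [conCoord, catMap]
  push_cast
  have h := goldenRatio_sq
  generalize φ = a at h ⊢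
  linear_combination -((a - 1) * v.1 + a * v.2) * h

theorem expCoord_iterate_catMap (T : ℕ) (v : ℤ × ℤ) :
    expCoord (catMap^[T] v) = φ ^ (2 * T) * expCoord v := by
  induction T with
  | zero => simp
  | succ T ih =>
    rw [Function.iterate_succ_apply', expCoord_catMap, ih, ← mul_assoc, ← pow_add]
    ring_nf

theorem pow_mul_conCoord_iterate_catMap (T : ℕ) (v : ℤ × ℤ) :
    φ ^ (2 * T) * conCoord (catMap^[T] v) = conCoord v := by
  induction T with
  | zero => simp
  | succ T ih =>
    rw [Function.iterate_succ_apply', ← ih, ← sq_mul_conCoord_catMap (catMap^[T] v), mul_add,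
      mul_one, pow_add, mul_assoc]

theorem natAbs_le_one_of_abs_coord_le {v : ℤ × ℤ} (hc : |conCoord v| ≤ 2)
    (he : |expCoord v| ≤ 3) : v.1.natAbs ≤ 1 ∧ v.2.natAbs ≤ 1 := by
  have h1 : (φ + 2) * v.1 = φ * expCoord v + conCoord v := by
    simp only [expCoord, conCoord]
    have h := goldenRatio_sq
    generalize φ = a at h ⊢
    linear_combination -(v.1 : ℝ) * h
  have h2 : (φ + 2) * v.2 = expCoord v - φ * conCoord v := by
    simp only [expCoord, conCoord]
    have h := goldenRatio_sq
    generalize φ = a at h ⊢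
    linear_combination -(v.2 : ℝ) * h
  have hφ := goldenRatio_lt_two
  have hφ0 := goldenRatio_pos
  rw [abs_le] at hc he
  have hx : |(v.1 : ℝ)| < 2 := abs_lt.2 ⟨by nlinarith, by nlinarith⟩
  have hy : |(v.2 : ℝ)| < 2 := abs_lt.2 ⟨by nlinarith, by nlinarith⟩
  rw [← Int.cast_abs] at hx hy
  have hx' : |v.1| < 2 := by exact_mod_cast hx
  have hy' : |v.2| < 2 := by exact_mod_cast hy
  rw [Int.abs_eq_natAbs] at hx' hy'
  omega

theorem exists_eq_add_catMap {N : ℕ} {v : ℤ × ℤ} (hc : |conCoord v| ≤ 2)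
    (he : |expCoord v| ≤ φ ^ (2 * (N + 1)) + 2) :
    ∃ r : ℤ, ∃ w : ℤ × ℤ, v = (r, 0) + catMap w ∧ r.natAbs ≤ 2 ∧
      |conCoord w| ≤ 2 ∧ |expCoord w| ≤ φ ^ (2 * N) + 2 := by
  set r := round (conCoord v)
  set w : ℤ × ℤ := (v.1 - r - v.2, -(v.1 - r) + 2 * v.2)
  have hr : |conCoord v - r| ≤ 1 / 2 := abs_sub_round _
  have hr_natAbs : r.natAbs ≤ 2 := by
    have h : |(r : ℝ)| < 3 := by
      have h := abs_sub (conCoord v) (conCoord v - r)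
      rw [sub_sub_cancel] at h
      linarith
    have h' : (r.natAbs : ℝ) < 3 := by rwa [Nat.cast_natAbs, Int.cast_abs]
    exact Nat.lt_succ_iff.1 (by exact_mod_cast h')
  have hφ2 : φ ^ 2 = φ + 1 := goldenRatio_sq
  have hcw : conCoord w = φ ^ 2 * (conCoord v - r) := by
    simp only [conCoord, w]
    push_cast
    generalize φ = a at hφ2 ⊢
    linear_combination (-(v.1 - r : ℝ) + (a + 1) * v.2) * hφ2
  have hew : φ ^ 2 * expCoord w = expCoord v - φ * r := by
    simp only [expCoord, w]
    push_cast
    generalize φ = a at hφ2 ⊢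
    linear_combination (a * (v.1 - r : ℝ) - (a - 1) * v.2) * hφ2
  refine ⟨r, w, ?_, hr_natAbs, ?_, ?_⟩
  · ext <;> simp only [catMap, w, Prod.fst_add, Prod.snd_add] <;> ring
  · rw [hcw, abs_mul, abs_of_pos (by positivity)]
    nlinarith [goldenRatio_lt_two, goldenRatio_pos, abs_nonneg (conCoord v - r)]
  · have hr2 : |(r : ℝ)| ≤ 2 := by
      rw [← Int.cast_abs, Int.abs_eq_natAbs]; exact_mod_cast hr_natAbs
    have h : φ ^ 2 * |expCoord w| ≤ φ ^ 2 * (φ ^ (2 * N) + 2) :=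
      calc φ ^ 2 * |expCoord w| = |expCoord v - φ * r| := by
            rw [← hew, abs_mul, abs_of_pos (pow_pos goldenRatio_pos 2)]
        _ ≤ |expCoord v| + |φ * r| := abs_sub _ _
        _ = |expCoord v| + φ * |(r : ℝ)| := by rw [abs_mul, abs_of_pos goldenRatio_pos]
        _ ≤ φ ^ (2 * (N + 1)) + 2 + φ * 2 := by gcongr
        _ = φ ^ 2 * (φ ^ (2 * N) + 2) := by rw [mul_add, pow_add, hφ2]; ring
    exact le_of_mul_le_mul_left h (by positivity)

end CatMap

section Hyperbolic

open Real
open scoped goldenRatio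

variable {G : Type*} [Group G]

def pairPow (X Y : G) (v : ℤ × ℤ) : G := X ^ v.1 * Y ^ v.2

theorem pairPow_add {X Y : G} (hXY : Commute X Y) (v w : ℤ × ℤ) :
    pairPow X Y (v + w) = pairPow X Y v * pairPow X Y w := by
  simp only [pairPow, Prod.fst_add, Prod.snd_add, zpow_add]
  exact (hXY.zpow_zpow w.1 v.2).mul_mul_mul_comm _ _

theorem conj_pairPow {X Y g : G} (hXY : Commute X Y) (hgX : g * X * g⁻¹ = X ^ 2 * Y)
    (hgY : g * Y * g⁻¹ = X * Y) (v : ℤ × ℤ) :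
    g * pairPow X Y v * g⁻¹ = pairPow X Y (catMap v) :=
  calc g * pairPow X Y v * g⁻¹ = (g * X * g⁻¹) ^ v.1 * (g * Y * g⁻¹) ^ v.2 := by
        rw [conj_zpow, conj_zpow, pairPow]; group
    _ = pairPow X Y (2 * v.1, v.1) * pairPow X Y (v.2, v.2) := by
        rw [hgX, hgY, (hXY.pow_left 2).mul_zpow, hXY.mul_zpow, pairPow, pairPow, ← zpow_natCast,
          ← zpow_mul]
        norm_num
    _ = pairPow X Y (catMap v) := by
        rw [← pairPow_add hXY, Prod.mk_add_mk, catMap]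

theorem pow_conj_pairPow {X Y g : G} (hXY : Commute X Y) (hgX : g * X * g⁻¹ = X ^ 2 * Y)
    (hgY : g * Y * g⁻¹ = X * Y) (T : ℕ) (v : ℤ × ℤ) :
    g ^ T * pairPow X Y v * (g ^ T)⁻¹ = pairPow X Y (catMap^[T] v) := by
  induction T with
  | zero => simp
  | succ T ih =>
    rw [Function.iterate_succ_apply', ← conj_pairPow hXY hgX hgY, ← ih, pow_succ']
    group

theorem wordLengthLE_pairPow {S : Set G} {X Y g : G} {m : ℕ} (hX : X ∈ S ∪ S⁻¹)
    (hY : Y ∈ S ∪ S⁻¹) (hXY : Commute X Y) (hgX : g * X * g⁻¹ = X ^ 2 * Y)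
    (hgY : g * Y * g⁻¹ = X * Y) (hg : WordLengthLE S g m) (N : ℕ) {v : ℤ × ℤ}
    (hc : |conCoord v| ≤ 2) (he : |expCoord v| ≤ φ ^ (2 * N) + 2) :
    WordLengthLE S (pairPow X Y v) ((2 * m + 2) * N + 2) := by
  induction N generalizing v with
  | zero =>
    obtain ⟨h1, h2⟩ := natAbs_le_one_of_abs_coord_le hc (by norm_num at he; linarith)
    exact ((WordLengthLE.zpow_of_mem hX v.1).mul (WordLengthLE.zpow_of_mem hY v.2)).mono
      (by omega)
  | succ N ih =>
    obtain ⟨r, w, rfl, hr, hcw, hew⟩ := exists_eq_add_catMap hc he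
    rw [pairPow_add hXY, ← conj_pairPow hXY hgX hgY, pairPow, zpow_zero, mul_one]
    exact ((WordLengthLE.zpow_of_mem hX r).mul (hg.conj (ih hcw hew))).mono (by linarith)

theorem wordLengthLE_zpow_of_catMap {S : Set G} {X Y g : G} {m : ℕ} (hX : X ∈ S ∪ S⁻¹)
    (hY : Y ∈ S ∪ S⁻¹) (hXY : Commute X Y) (hgX : g * X * g⁻¹ = X ^ 2 * Y)
    (hgY : g * Y * g⁻¹ = X * Y) (hg : WordLengthLE S g m) {n : ℤ} {T : ℕ}
    (hT : n.natAbs ≤ 2 ^ T) :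
    WordLengthLE S (X ^ n) ((2 * m + 2) * (2 * T + 1) + 2 + 2 * m * T) := by
  set w := catMap^[T] (n, 0)
  have hφT : 0 < φ ^ (2 * T) := by positivity
  have hn : |(n : ℝ)| ≤ φ ^ (2 * T) :=
    calc |(n : ℝ)| ≤ 2 ^ T := by rw [← Int.cast_abs, Int.abs_eq_natAbs]; exact_mod_cast hT
      _ ≤ (φ ^ 2) ^ T := by gcongr; linarith [goldenRatio_sq, one_lt_goldenRatio]
      _ = φ ^ (2 * T) := (pow_mul _ _ _).symm
  have hc : |conCoord w| ≤ 2 := by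
    have h := pow_mul_conCoord_iterate_catMap T (n, 0)
    rw [show conCoord (n, 0) = n by simp [conCoord]] at h
    have : φ ^ (2 * T) * |conCoord w| ≤ φ ^ (2 * T) * 1 := by
      rw [mul_one, ← abs_of_pos hφT, ← abs_mul, h, abs_of_pos hφT]; exact hn
    linarith [le_of_mul_le_mul_left this hφT]
  have he : |expCoord w| ≤ φ ^ (2 * (2 * T + 1)) + 2 := by
    have h := expCoord_iterate_catMap T (n, 0)
    rw [show expCoord (n, 0) = φ * n by simp [expCoord]] at h
    have hn' : |(n : ℝ)| ≤ φ ^ (2 * T) * φ := by nlinarith [one_lt_goldenRatio]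
    calc |expCoord w| = φ ^ (2 * T) * φ * |(n : ℝ)| := by
          rw [h, abs_mul, abs_mul, abs_of_pos hφT, abs_of_pos goldenRatio_pos, mul_assoc]
      _ ≤ φ ^ (2 * T) * φ * (φ ^ (2 * T) * φ) := by gcongr
      _ = φ ^ (2 * (2 * T + 1)) := by ring
      _ ≤ φ ^ (2 * (2 * T + 1)) + 2 := by linarith
  have hX_eq : X ^ n = (g ^ T)⁻¹ * pairPow X Y w * ((g ^ T)⁻¹)⁻¹ := by
    rw [← pow_conj_pairPow hXY hgX hgY, pairPow, zpow_zero, mul_one]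
    group
  rw [hX_eq]
  exact ((hg.pow T).inv.conj (wordLengthLE_pairPow hX hY hXY hgX hgY hg _ hc he)).mono
    (by linarith)

end Hyperbolic

section Transvection

open Matrix

variable {ι R : Type*} [Fintype ι] [DecidableEq ι] [CommRing R]

theorem Matrix.transvection_commute {a b c e : ι} (hbc : b ≠ c) (hea : e ≠ a) (s t : R) :
    Commute (transvection a b s) (transvection c e t) := by
  simp only [Commute, SemiconjBy, transvection, mul_add, add_mul, mul_one, one_mul,
    single_mul_single_of_ne _ _ _ _ hbc, single_mul_single_of_ne _ _ _ _ hea]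
  abel

theorem Matrix.transvection_mul_transvection_steinberg {a b c : ι} (hab : a ≠ b) (hbc : b ≠ c)
    (s t : R) :
    transvection a c s * transvection c b t =
      transvection a b (s * t) * transvection c b t * transvection a c s := by
  simp only [transvection, mul_add, add_mul, mul_one, one_mul, single_mul_single_same,
    single_mul_single_of_ne _ _ _ _ hbc, single_mul_single_of_ne _ _ _ _ hab.symm, add_zero]
  abel

end Transvection

theorem elemSL_commute {d : ℕ} {a b c e : Fin d} (hab : a ≠ b) (hce : c ≠ e) (hbc : b ≠ c)
    (hea : e ≠ a) : Commute (elemSL a b hab) (elemSL c e hce) :=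
  Subtype.ext (Matrix.transvection_commute hbc hea 1 1)

theorem elemSL_mul_elemSL {d : ℕ} {a b c : Fin d} (hab : a ≠ b) (hac : a ≠ c) (hcb : c ≠ b) :
    elemSL a c hac * elemSL c b hcb = elemSL a b hab * elemSL c b hcb * elemSL a c hac :=
  Subtype.ext <| (Matrix.transvection_mul_transvection_steinberg hab hcb.symm (1 : ℤ) 1).trans
    (by rw [one_mul]; rfl)

theorem wordLengthLE_elemSL_zpow {d : ℕ} {i j k : Fin d} (hij : i ≠ j) (hki : k ≠ i)
    (hkj : k ≠ j) {n : ℤ} {T : ℕ} (hT : n.natAbs ≤ 2 ^ T) :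
    WordLengthLE (elemGens d) (elemSL i j hij ^ n) (16 * T + 8) := by
  set X := elemSL i j hij
  set Y := elemSL k j hkj
  set P := elemSL i k hki.symm
  set Q := elemSL k i hki
  have hXY : Commute X Y := elemSL_commute _ _ hkj.symm hij.symm
  have hPX : P * X * P⁻¹ = X := by
    rw [(elemSL_commute _ _ hki hij.symm).eq, mul_inv_cancel_right]
  have hQY : Q * Y * Q⁻¹ = Y := by
    rw [(elemSL_commute _ _ hki.symm hkj.symm).eq, mul_inv_cancel_right]
  have hPY : P * Y * P⁻¹ = X * Y := by
    rw [elemSL_mul_elemSL hij, mul_inv_cancel_right]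
  have hQX : Q * X * Q⁻¹ = Y * X := by
    rw [elemSL_mul_elemSL hkj, mul_inv_cancel_right]
  have hgX : P * Q * X * (P * Q)⁻¹ = X ^ 2 * Y :=
    calc P * Q * X * (P * Q)⁻¹ = P * (Q * X * Q⁻¹) * P⁻¹ := by group
      _ = (P * Y * P⁻¹) * (P * X * P⁻¹) := by rw [hQX]; group
      _ = X ^ 2 * Y := by rw [hPY, hPX, mul_assoc, ← hXY.eq, ← mul_assoc, sq]
  have hgY : P * Q * Y * (P * Q)⁻¹ = X * Y :=
    calc P * Q * Y * (P * Q)⁻¹ = P * (Q * Y * Q⁻¹) * P⁻¹ := by group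
      _ = X * Y := by rw [hQY, hPY]
  have mem (a b : Fin d) (hab : a ≠ b) : elemSL a b hab ∈ elemGens d ∪ (elemGens d)⁻¹ :=
    Or.inl ⟨a, b, hab, rfl⟩
  have hg := (WordLengthLE.of_mem (mem i k hki.symm)).mul (WordLengthLE.of_mem (mem k i hki))
  exact (wordLengthLE_zpow_of_catMap (mem i j hij) (mem k j hkj) hXY hgX hgY hg hT).mono
    (by omega)

theorem natLog_two_add_one_mul_log_two_le {m : ℕ} (hm : m ≠ 0) :
    ((Nat.log 2 m + 1 : ℕ) : ℝ) * Real.log 2 ≤ 2 * Real.log (m + 1) := by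
  have h : 2 ^ (Nat.log 2 m + 1) ≤ (m + 1) ^ 2 := by
    have := Nat.pow_log_le_self 2 hm
    rw [pow_succ]
    nlinarith
  rw [← Real.log_pow, show 2 * Real.log (m + 1) = Real.log ((m + 1) ^ 2) by
    rw [Real.log_pow]; norm_num]
  exact Real.log_le_log (by positivity) (by exact_mod_cast h)

theorem elementary_is_U1 (d : ℕ) (hd : 3 ≤ d) (i j : Fin d) (hij : i ≠ j) :
    ∃ C : ℝ, 0 < C ∧ ∀ n : ℤ,
      (wordLength (elemGens d) (elemSL i j hij ^ n) : ℝ) ≤ C * Real.log (|n| + 1) := by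
  obtain ⟨k, hki, hkj⟩ := Fin.exists_ne_and_ne_of_two_lt i j hd
  have hlog2 : 0 < Real.log 2 := Real.log_pos one_lt_two
  refine ⟨40 / Real.log 2, by positivity, fun n => ?_⟩
  rcases eq_or_ne n 0 with rfl | hn
  · simpa using WordLengthLE.one.wordLength_le
  have hlen : (wordLength (elemGens d) (elemSL i j hij ^ n) : ℝ) ≤
      16 * ((Nat.log 2 n.natAbs + 1 : ℕ) : ℝ) + 8 := by
    exact_mod_cast (wordLengthLE_elemSL_zpow hij hki hkj
      (Nat.lt_pow_succ_log_self one_lt_two n.natAbs).le).wordLength_le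
  have hlogT := natLog_two_add_one_mul_log_two_le (Int.natAbs_ne_zero.2 hn)
  rw [Nat.cast_natAbs] at hlogT
  have hlog_n : Real.log 2 ≤ Real.log (|n| + 1) := by
    refine Real.log_le_log two_pos ?_
    have : (1 : ℝ) ≤ |n| := by exact_mod_cast Int.one_le_abs hn
    linarith
  refine hlen.trans ?_
  rw [div_mul_eq_mul_div, le_div_iff₀ hlog2]
  linarith
end

section
/- Let u = [[1,1],[0,1]] and v = [[0,1],[−1,0]] in SL(2,ℤ). For every integer n ≥ 1, the word length of uⁿ with respect to the generating set {u, v} is exactly n; that is, uⁿ is a product of n elements of {u, u⁻¹, v, v⁻¹} and cannot be written as a product of fewer than n such elements. -/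
open scoped MatrixGroups

/-- The matrix `u = [[1,1],[0,1]]` in `SL(2, ℤ)`. -/
def u : SL(2, ℤ) := ⟨!![1, 1; 0, 1], by norm_num [Matrix.det_fin_two_of]⟩

/-- The matrix `v = [[0,1],[-1,0]]` in `SL(2, ℤ)`. -/
def v : SL(2, ℤ) := ⟨!![0, 1; -1, 0], by norm_num [Matrix.det_fin_two_of]⟩

/-!
The action of `SL(2, ℤ)` on the upper half plane factors through a free product
`ℤ/2 * ℤ/3 = ⟨s⟩ * ⟨t⟩`, with `s ↦ v` and `t ↦ uv`: the ping-pong lemma, played on the half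
planes `Re z > 0` and `Re z < 0`, shows that this map is injective. Since `u = -(uv)v`, a word of
length `k` in `u^{±1}, v^{±1}` lifts to an element of the free product whose reduced form has at
most `2k` syllables, while `u^n` lifts to `(ts)^n`, whose reduced form has exactly `2n`.
-/

namespace Monoid.CoprodI

variable {ι : Type*} {M : ι → Type*} [∀ i, Monoid (M i)] [∀ i, DecidableEq (M i)]

namespace Word

theorem length_rcons_le {i : ι} (p : Pair M i) :
    (rcons p).toList.length ≤ p.tail.toList.length + 1 := by
  rw [rcons]
  split_ifs
  · exact Nat.le_succ _
  · exact le_rfl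

variable [DecidableEq ι]

theorem equiv_mul (g h : CoprodI M) : equiv (g * h) = g • equiv h :=
  mul_smul g h (empty : Word M)

theorem length_equivPair_tail_le (i : ι) (w : Word M) :
    (equivPair i w).tail.toList.length ≤ w.toList.length := by
  conv_rhs => rw [← (equivPair i).symm_apply_apply w, equivPair_symm, rcons]
  split_ifs
  · exact le_rfl
  · exact Nat.le_succ _

end Word

variable [DecidableEq ι]

def syllableLength (g : CoprodI M) : ℕ := (Word.equiv g).toList.length

theorem syllableLength_one : syllableLength (1 : CoprodI M) = 0 := by
  rw [syllableLength,
    show Word.equiv (1 : CoprodI M) = Word.empty from one_smul (CoprodI M) (Word.empty : Word M)]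
  rfl

theorem syllableLength_of_mul_le {i : ι} (m : M i) (g : CoprodI M) :
    syllableLength (of m * g) ≤ syllableLength g + 1 := by
  rw [syllableLength, syllableLength, Word.equiv_mul, Word.of_smul_def]
  exact (Word.length_rcons_le _).trans (Nat.add_le_add_right (Word.length_equivPair_tail_le _ _) 1)

theorem syllableLength_of_mul_of_mul_le {i j : ι} (a : M i) (b : M j) (g : CoprodI M) :
    syllableLength (of a * of b * g) ≤ syllableLength g + 2 := by
  rw [mul_assoc]
  linarith [syllableLength_of_mul_le a (of b * g), syllableLength_of_mul_le b g]

theorem equiv_of_mul {i : ι} {m : M i} {g : CoprodI M} (hg : (Word.equiv g).fstIdx ≠ some i)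
    (hm : m ≠ 1) : Word.equiv (of m * g) = Word.cons m (Word.equiv g) hg hm := by
  rw [Word.cons_eq_smul, Word.equiv_mul]

theorem syllableLength_of_mul {i : ι} {m : M i} {g : CoprodI M}
    (hg : (Word.equiv g).fstIdx ≠ some i) (hm : m ≠ 1) :
    syllableLength (of m * g) = syllableLength g + 1 := by
  rw [syllableLength, equiv_of_mul hg hm]
  rfl

theorem syllableLength_pow_of_mul_of {i j : ι} (hij : i ≠ j) {a : M i} {b : M j} (ha : a ≠ 1)
    (hb : b ≠ 1) (n : ℕ) : syllableLength ((of a * of b) ^ n) = 2 * n := by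
  suffices h : syllableLength ((of a * of b) ^ n) = 2 * n ∧
      (Word.equiv ((of a * of b) ^ n)).fstIdx ≠ some j from h.1
  induction n with
  | zero => exact ⟨syllableLength_one, by simp [Word.equiv, Word.fstIdx]⟩
  | succ n ih =>
    obtain ⟨hlen, hfst⟩ := ih
    set g := (of a * of b) ^ n
    have hfst' : (Word.equiv (of b * g)).fstIdx ≠ some i := by
      rw [equiv_of_mul hfst hb, Word.fstIdx_cons]
      exact fun h => hij (Option.some_injective _ h).symm
    refine ⟨?_, ?_⟩
    · rw [pow_succ', mul_assoc, syllableLength_of_mul hfst' ha, syllableLength_of_mul hfst hb,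
        hlen]
      ring
    · rw [pow_succ', mul_assoc, equiv_of_mul hfst' ha, Word.fstIdx_cons]
      exact fun h => hij (Option.some_injective _ h)

end Monoid.CoprodI

def zmodPowHom {G : Type*} [Group G] (n : ℕ) (g : G) (hg : g ^ n = 1) :
    Multiplicative (ZMod n) →* G :=
  AddMonoidHom.toMultiplicativeLeft
    (ZMod.lift n ⟨zmultiplesHom (Additive G) (Additive.ofMul g), by
      simpa using congrArg Additive.ofMul hg⟩)

theorem zmodPowHom_ofAdd_intCast {G : Type*} [Group G] (n : ℕ) (g : G) (hg : g ^ n = 1)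
    (k : ℤ) : zmodPowHom n g hg (Multiplicative.ofAdd (k : ZMod n)) = g ^ k := by
  simp [zmodPowHom, ZMod.lift_coe]

namespace ModularPingPong

open UpperHalfPlane ModularGroup Monoid CoprodI

theorem u_eq_T : u = T := rfl
theorem v_eq_neg_S : v = -S := by ext i j; fin_cases i <;> fin_cases j <;> rfl
theorem v_mul_v : v * v = -1 := by ext i j; fin_cases i <;> fin_cases j <;> rfl
theorem uv_pow_three : (u * v) ^ 3 = 1 := by ext i j; fin_cases i <;> fin_cases j <;> rfl

theorem v_inv_eq : v⁻¹ = -v := inv_eq_of_mul_eq_one_right (by rw [mul_neg, v_mul_v, neg_neg])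

theorem uv_inv_eq : (u * v)⁻¹ = (u * v) ^ 2 :=
  inv_eq_of_mul_eq_one_right (by rw [← pow_succ', uv_pow_three])

theorem re_v_smul (z : ℍ) : (v • z).re = -(z.re / Complex.normSq z) := by
  rw [v_eq_neg_S, SL_neg_smul, modular_S_smul]
  simp

theorem re_u_smul (z : ℍ) : (u • z).re = z.re + 1 := by
  rw [u_eq_T, modular_T_smul]
  simp [add_comm]

theorem re_v_smul_neg {z : ℍ} (hz : 0 < z.re) : (v • z).re < 0 := by
  rw [re_v_smul]
  exact neg_neg_of_pos (div_pos hz (Complex.normSq_pos.2 z.ne_zero))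

theorem re_v_smul_pos {z : ℍ} (hz : z.re < 0) : 0 < (v • z).re := by
  rw [re_v_smul]
  exact neg_pos_of_neg (div_neg_of_neg_of_pos hz (Complex.normSq_pos.2 z.ne_zero))

theorem re_uv_smul_pos {z : ℍ} (hz : z.re < 0) : 0 < ((u * v) • z).re := by
  rw [mul_smul, re_u_smul]
  linarith [re_v_smul_pos hz]

theorem re_uv_inv_smul_pos {z : ℍ} (hz : z.re < 0) : 0 < ((u * v)⁻¹ • z).re := by
  rw [mul_inv_rev, mul_smul, v_inv_eq, SL_neg_smul]
  exact re_v_smul_pos (by rw [u_eq_T, re_T_inv_smul]; linarith)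

noncomputable def π : SL(2, ℤ) →* Equiv.Perm ℍ := MulAction.toPermHom SL(2, ℤ) ℍ

theorem π_neg (g : SL(2, ℤ)) : π (-g) = π g := by
  ext z
  exact congrArg _ (SL_neg_smul g z)

theorem π_v_sq : π v ^ 2 = 1 := by rw [← map_pow, sq, v_mul_v, π_neg, map_one]
theorem π_uv_cube : π (u * v) ^ 3 = 1 := by rw [← map_pow, uv_pow_three, map_one]

abbrev H (b : Bool) : Type := Multiplicative (ZMod (cond b 3 2))

noncomputable def factorHom : ∀ b, H b →* Equiv.Perm ℍ
  | false => zmodPowHom 2 (π v) π_v_sq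
  | true => zmodPowHom 3 (π (u * v)) π_uv_cube

def X (b : Bool) : Set ℍ := cond b {z | 0 < z.re} {z | z.re < 0}

theorem factorHom_false_ofAdd_one : factorHom false (Multiplicative.ofAdd 1) = π v := by
  show zmodPowHom 2 (π v) π_v_sq _ = _
  simpa using zmodPowHom_ofAdd_intCast 2 (π v) π_v_sq 1

theorem factorHom_true_ofAdd_one : factorHom true (Multiplicative.ofAdd 1) = π (u * v) := by
  show zmodPowHom 3 (π (u * v)) π_uv_cube _ = _
  simpa using zmodPowHom_ofAdd_intCast 3 (π (u * v)) π_uv_cube 1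

theorem factorHom_true_ofAdd_two : factorHom true (Multiplicative.ofAdd 2) = π (u * v)⁻¹ := by
  show zmodPowHom 3 (π (u * v)) π_uv_cube _ = _
  rw [uv_inv_eq, map_pow]
  simpa using zmodPowHom_ofAdd_intCast 3 (π (u * v)) π_uv_cube 2

open Pointwise in
theorem factorHom_pingPong :
    Pairwise fun i j => ∀ h : H i, h ≠ 1 → factorHom i h • X j ⊆ X i := by
  rintro (_ | _) (_ | _) hij h hh <;> simp only [ne_eq, not_true_eq_false] at hij
  · obtain rfl : h = Multiplicative.ofAdd 1 := by
      change Multiplicative (ZMod 2) at h; revert h; decide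
    rw [factorHom_false_ofAdd_one]
    rintro _ ⟨z, hz, rfl⟩
    exact re_v_smul_neg hz
  · obtain rfl | rfl : h = Multiplicative.ofAdd 1 ∨ h = Multiplicative.ofAdd 2 := by
      change Multiplicative (ZMod 3) at h; revert h; decide
    · rw [factorHom_true_ofAdd_one]
      rintro _ ⟨z, hz, rfl⟩
      exact re_uv_smul_pos hz
    · rw [factorHom_true_ofAdd_two]
      rintro _ ⟨z, hz, rfl⟩
      exact re_uv_inv_smul_pos hz

theorem lift_factorHom_injective : Function.Injective (lift factorHom) := by
  refine lift_injective_of_ping_pong factorHom (Or.inr ⟨true, ?_⟩) X ?_ ?_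
    factorHom_pingPong
  · simp [Cardinal.mk_fintype]
  · rintro (_ | _)
    · exact ⟨⟨-1 + Complex.I, by simp⟩, by simp [X]⟩
    · exact ⟨⟨1 + Complex.I, by simp⟩, by simp [X]⟩
  · rintro (_ | _) (_ | _) hij <;> simp only [ne_eq, not_true_eq_false] at hij
    all_goals exact Set.disjoint_left.2 fun _ h₁ h₂ => lt_asymm (α := ℝ) h₁ h₂

noncomputable def s : CoprodI H := of (Multiplicative.ofAdd 1 : H false)
noncomputable def t : CoprodI H := of (Multiplicative.ofAdd 1 : H true)

theorem lift_s : lift factorHom s = π v := by rw [s, lift_of, factorHom_false_ofAdd_one]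

theorem lift_t_mul_s : lift factorHom (t * s) = π u := by
  rw [map_mul, lift_s, t, lift_of, factorHom_true_ofAdd_one, ← map_mul, mul_assoc, v_mul_v,
    mul_neg_one, π_neg]

theorem exists_lift_eq_of_mem {x : SL(2, ℤ)} (hx : x ∈ ({u, v} : Set SL(2, ℤ)) ∪ {u, v}⁻¹) :
    ∃ k, lift factorHom k = π x ∧ ∀ w, syllableLength (k * w) ≤ syllableLength w + 2 := by
  have one_letter {i} (a : H i) (w : CoprodI H) :
      syllableLength (of a * w) ≤ syllableLength w + 2 :=
    (syllableLength_of_mul_le a w).trans (Nat.le_succ _)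
  simp only [Set.mem_union, Set.mem_insert_iff, Set.mem_singleton_iff, Set.mem_inv,
    inv_eq_iff_eq_inv] at hx
  rcases hx with (rfl | rfl) | (rfl | rfl)
  · exact ⟨t * s, lift_t_mul_s, syllableLength_of_mul_of_mul_le _ _⟩
  · exact ⟨s, lift_s, one_letter _⟩
  · refine ⟨(t * s)⁻¹, by rw [map_inv, lift_t_mul_s, map_inv], ?_⟩
    rw [mul_inv_rev, s, t, ← map_inv (of (M := H)), ← map_inv (of (M := H))]
    exact syllableLength_of_mul_of_mul_le _ _
  · refine ⟨s⁻¹, by rw [map_inv, lift_s, map_inv], ?_⟩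
    rw [s, ← map_inv (of (M := H))]
    exact one_letter _

theorem exists_lift_eq_prod (l : List SL(2, ℤ))
    (hl : ∀ x ∈ l, x ∈ ({u, v} : Set SL(2, ℤ)) ∪ {u, v}⁻¹) :
    ∃ w, lift factorHom w = π l.prod ∧ syllableLength w ≤ 2 * l.length := by
  induction l with
  | nil => exact ⟨1, by simp, by simp [syllableLength_one]⟩
  | cons x l ih =>
    obtain ⟨w, hw, hlen⟩ := ih fun y hy => hl y (List.mem_cons_of_mem x hy)
    obtain ⟨k, hk, hklen⟩ := exists_lift_eq_of_mem (hl x List.mem_cons_self)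
    refine ⟨k * w, by rw [map_mul, hk, hw, List.prod_cons, map_mul], ?_⟩
    rw [List.length_cons]
    linarith [hklen w]

end ModularPingPong

open ModularPingPong Monoid.CoprodI

theorem wordLength_u_pow_general (n : ℕ) : wordLength {u, v} (u ^ n) = n := by
  refine IsLeast.csInf_eq ⟨⟨List.replicate n u, fun x hx => ?_, List.length_replicate,
    List.prod_replicate n u⟩, ?_⟩
  · simp [List.eq_of_mem_replicate hx]
  rintro _ ⟨l, hl, rfl, hprod⟩
  obtain ⟨w, hw, hlen⟩ := exists_lift_eq_prod l hl
  have hw' : w = (t * s) ^ n :=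
    lift_factorHom_injective (by rw [hw, hprod, map_pow, map_pow, lift_t_mul_s])
  rw [hw', t, s, syllableLength_pow_of_mul_of (by decide) (by decide) (by decide)] at hlen
  omega

theorem wordLength_u_pow (n : ℕ) (hn : 1 ≤ n) : wordLength {u, v} (u ^ n) = n :=
  wordLength_u_pow_general n
end

section
/- Let n ≥ 1 and let P⁽ⁿ⁾ be the set of symmetric, positive definite n×n real matrices of determinant 1. Then the function d_P(S₁,S₂) = log‖S₁⁻¹S₂‖ + log‖S₂⁻¹S₁‖ (operator norms) is a metric on P⁽ⁿ⁾: it is non-negative, symmetric, satisfies the triangle inequality, and d_P(S₁,S₂) = 0 if and only if S₁ = S₂. -/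
open Matrix

/-- Membership in `P⁽ⁿ⁾`: symmetric, positive definite, determinant 1. -/
def memP (n : ℕ) (S : Matrix (Fin n) (Fin n) ℝ) : Prop :=
  S.IsSymm ∧ (∀ x : Fin n → ℝ, 0 ≤ x ⬝ᵥ S.mulVec x) ∧
    (∀ x : Fin n → ℝ, x ⬝ᵥ S.mulVec x = 0 → x = 0) ∧ S.det = 1

/-- The operator norm of an `n × n` real matrix with respect to the Euclidean norm. -/
noncomputable def opNorm {n : ℕ} (A : Matrix (Fin n) (Fin n) ℝ) : ℝ :=
  ‖Matrix.toEuclideanCLM (𝕜 := ℝ) A‖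

/-- The distance function on `P⁽ⁿ⁾`. -/
noncomputable def dP {n : ℕ} (S₁ S₂ : Matrix (Fin n) (Fin n) ℝ) : ℝ :=
  Real.log (opNorm (S₁⁻¹ * S₂)) + Real.log (opNorm (S₂⁻¹ * S₁))

/-! With `A = S₁⁻¹ S₂`, `dP S₁ S₂ = log ‖A‖ + log ‖A⁻¹‖` for the L² operator norm, so symmetry,
non-negativity (`‖A‖ ‖A⁻¹‖ ≥ ‖1‖`) and the triangle inequality (`S₁⁻¹ S₃ = (S₁⁻¹ S₂) (S₂⁻¹ S₃)`
and submultiplicativity) hold for all invertible matrices. If `dP S₁ S₂ = 0`, then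
`‖A‖ ‖A⁻¹‖ = 1`, which forces `‖A x‖ = ‖A‖ ‖x‖` for all `x`, i.e. `Aᵀ A = ‖A‖² • 1`; as
`det A = 1` the scale is `1` and `A` is orthogonal. Then `S₁⁻¹ S₂ S₂ S₁⁻¹ = A Aᵀ = 1`, so
`S₁² = S₂²`, and uniqueness of positive semidefinite square roots gives `S₁ = S₂`. -/

section NormedRing

variable {R : Type*} [NormedRing R] {a b : R}

theorem log_norm_mul_le (h : a * b ≠ 0) : Real.log ‖a * b‖ ≤ Real.log ‖a‖ + Real.log ‖b‖ := by
  have ha : ‖a‖ ≠ 0 := norm_ne_zero_iff.mpr (left_ne_zero_of_mul h)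
  have hb : ‖b‖ ≠ 0 := norm_ne_zero_iff.mpr (right_ne_zero_of_mul h)
  rw [← Real.log_mul ha hb]
  exact Real.log_le_log (norm_pos_iff.mpr h) (norm_mul_le a b)

variable [Nontrivial R]

theorem log_norm_add_log_norm_nonneg (h : a * b = 1) : 0 ≤ Real.log ‖a‖ + Real.log ‖b‖ :=
  (Real.log_nonneg (h ▸ one_le_norm_one R)).trans (log_norm_mul_le (h ▸ one_ne_zero))

theorem norm_mul_norm_le_one_of_log_norm_add_log_norm_nonpos (h : a * b = 1)
    (hlog : Real.log ‖a‖ + Real.log ‖b‖ ≤ 0) : ‖a‖ * ‖b‖ ≤ 1 := by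
  rwa [← Real.log_mul (norm_ne_zero_iff.mpr (left_ne_zero_of_mul_eq_one h))
    (norm_ne_zero_iff.mpr (right_ne_zero_of_mul_eq_one h)), Real.log_nonpos_iff (by positivity)]
    at hlog

end NormedRing

namespace ContinuousLinearMap

section Normed

variable {𝕜 E F : Type*} [NontriviallyNormedField 𝕜] [NormedAddCommGroup E] [NormedSpace 𝕜 E]
  [NormedAddCommGroup F] [NormedSpace 𝕜 F]

theorem norm_apply_eq_of_comp_eq_id_of_norm_mul_norm_le_one {T : E →L[𝕜] F} {U : F →L[𝕜] E}
    (hUT : U ∘L T = .id 𝕜 E) (h : ‖T‖ * ‖U‖ ≤ 1) (x : E) : ‖T x‖ = ‖T‖ * ‖x‖ := by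
  refine le_antisymm (T.le_opNorm x) ?_
  calc ‖T‖ * ‖x‖ = ‖T‖ * ‖U (T x)‖ := by rw [← comp_apply, hUT, id_apply]
    _ ≤ ‖T‖ * (‖U‖ * ‖T x‖) := by gcongr; exact U.le_opNorm _
    _ ≤ ‖T x‖ := by rw [← mul_assoc]; exact mul_le_of_le_one_left (norm_nonneg _) h

end Normed

section InnerProduct

variable {𝕜 H K : Type*} [RCLike 𝕜] [NormedAddCommGroup H] [InnerProductSpace 𝕜 H]
  [CompleteSpace H] [NormedAddCommGroup K] [InnerProductSpace 𝕜 K] [CompleteSpace K]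

theorem adjoint_comp_self_eq_of_norm_apply_eq {T : H →L[𝕜] K} {c : ℝ} (hc : 0 < c)
    (h : ∀ x, ‖T x‖ = c * ‖x‖) : adjoint T ∘L T = ((c ^ 2 : ℝ) : 𝕜) • 1 := by
  set S := (c⁻¹ : 𝕜) • T
  have hS : adjoint S ∘L S = 1 := by
    refine (norm_map_iff_adjoint_comp_self S).mp fun x => ?_
    rw [_root_.smul_apply, norm_smul, h, ← mul_assoc, norm_inv, RCLike.norm_ofReal, abs_of_pos hc,
      inv_mul_cancel₀ hc.ne', one_mul]
  have hT : T = (c : 𝕜) • S := by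
    rw [smul_smul, mul_inv_cancel₀ (RCLike.ofReal_ne_zero.mpr hc.ne'), one_smul]
  rw [hT, ← hS]
  simp [map_smulₛₗ, smul_smul, sq]

end InnerProduct

end ContinuousLinearMap

namespace Matrix

variable {ι 𝕜 : Type*} [Fintype ι] [DecidableEq ι]

theorem inv_mul_mul_inv_mul_cancel {α : Type*} [CommRing α] {S T : Matrix ι ι α}
    (hS : IsUnit S.det) (hT : IsUnit T.det) : S⁻¹ * T * (T⁻¹ * S) = 1 := by
  rw [mul_assoc, mul_nonsing_inv_cancel_left _ _ hT, nonsing_inv_mul _ hS]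

variable [RCLike 𝕜]

open scoped ComplexOrder MatrixOrder in
theorem PosDef.eq_of_inv_mul_mem_unitaryGroup {S T : Matrix ι ι 𝕜} (hS : S.PosDef)
    (hT : T.PosSemidef) (h : S⁻¹ * T ∈ unitaryGroup ι 𝕜) : S = T := by
  have hS_det : IsUnit S.det := (isUnit_iff_isUnit_det S).mp hS.isUnit
  have hSTTS : S⁻¹ * (T * T) * S⁻¹ = 1 := by
    have := mem_unitaryGroup_iff.mp h
    rwa [star_mul, star_eq_conjTranspose, star_eq_conjTranspose, conjTranspose_nonsing_inv,
      hS.isHermitian.eq, hT.isHermitian.eq, mul_assoc, ← mul_assoc T, ← mul_assoc] at this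
  have hsq : S * S = T * T := by
    calc S * S = S * (S⁻¹ * (T * T) * S⁻¹) * S := by rw [hSTTS, mul_one]
      _ = T * T := by
        simp only [mul_assoc, mul_nonsing_inv_cancel_left _ _ hS_det, nonsing_inv_mul _ hS_det,
          mul_one]
  exact (CFC.sq_eq_sq_iff S T hS.posSemidef.nonneg hT.nonneg).mp (by rw [sq, sq, hsq])

open scoped Matrix.Norms.L2Operator

variable [Nonempty ι]

theorem star_mul_self_eq_of_l2_opNorm_mul_le_one {A B : Matrix ι ι 𝕜} (hBA : B * A = 1)
    (h : ‖A‖ * ‖B‖ ≤ 1) : star A * A = ((‖A‖ ^ 2 : ℝ) : 𝕜) • 1 := by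
  have hUT : toEuclideanCLM (𝕜 := 𝕜) (n := ι) B ∘L toEuclideanCLM (𝕜 := 𝕜) (n := ι) A =
      .id 𝕜 _ := by
    rw [← ContinuousLinearMap.mul_def, ← map_mul, hBA, map_one, ContinuousLinearMap.one_def]
  have hA : 0 < ‖A‖ := norm_pos_iff.mpr (right_ne_zero_of_mul_eq_one hBA)
  have hadj := ContinuousLinearMap.adjoint_comp_self_eq_of_norm_apply_eq hA
    (ContinuousLinearMap.norm_apply_eq_of_comp_eq_id_of_norm_mul_norm_le_one hUT h)
  refine EquivLike.injective (toEuclideanCLM (𝕜 := 𝕜) (n := ι)) ?_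
  rw [map_mul, map_star, map_smul, map_one, ContinuousLinearMap.star_eq_adjoint,
    ContinuousLinearMap.mul_def, hadj]

theorem mem_unitaryGroup_of_l2_opNorm_mul_le_one {A B : Matrix ι ι 𝕜} (hBA : B * A = 1)
    (h : ‖A‖ * ‖B‖ ≤ 1) (hdet : ‖A.det‖ = 1) : A ∈ unitaryGroup ι 𝕜 := by
  have hstar := star_mul_self_eq_of_l2_opNorm_mul_le_one hBA h
  have hpow : (‖A‖ ^ 2) ^ Fintype.card ι = 1 := by
    have := congrArg det hstar
    rw [det_mul, star_eq_conjTranspose, det_conjTranspose, RCLike.star_def, RCLike.conj_mul, hdet,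
      det_smul, det_one, mul_one, RCLike.ofReal_one, one_pow] at this
    exact_mod_cast this.symm
  have hnorm : ‖A‖ ^ 2 = 1 :=
    (pow_eq_one_iff_of_nonneg (by positivity) Fintype.card_ne_zero).mp hpow
  rw [mem_unitaryGroup_iff', hstar, hnorm, RCLike.ofReal_one, one_smul]

end Matrix

theorem memP.det_eq_one {n : ℕ} {S : Matrix (Fin n) (Fin n) ℝ} (h : memP n S) : S.det = 1 :=
  h.2.2.2

theorem memP.isUnit_det {n : ℕ} {S : Matrix (Fin n) (Fin n) ℝ} (h : memP n S) : IsUnit S.det :=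
  h.det_eq_one ▸ isUnit_one

theorem memP.posDef {n : ℕ} {S : Matrix (Fin n) (Fin n) ℝ} (h : memP n S) : S.PosDef := by
  obtain ⟨hsymm, hnonneg, hdef, -⟩ := h
  refine PosDef.of_dotProduct_mulVec_pos ?_ fun x hx => ?_
  · rwa [IsHermitian, conjTranspose_eq_transpose_of_trivial]
  · simpa using (hnonneg x).lt_of_ne' (mt (hdef x) hx)

section dP

open scoped Matrix.Norms.L2Operator

variable {n : ℕ} {S₁ S₂ S₃ : Matrix (Fin n) (Fin n) ℝ}

theorem dP_eq_log_norm_add_log_norm (S₁ S₂ : Matrix (Fin n) (Fin n) ℝ) :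
    dP S₁ S₂ = Real.log ‖S₁⁻¹ * S₂‖ + Real.log ‖S₂⁻¹ * S₁‖ :=
  rfl

theorem dP_comm (S₁ S₂ : Matrix (Fin n) (Fin n) ℝ) : dP S₁ S₂ = dP S₂ S₁ :=
  add_comm _ _

variable [NeZero n]

theorem dP_self (h : IsUnit S₁.det) : dP S₁ S₁ = 0 := by
  rw [dP_eq_log_norm_add_log_norm, nonsing_inv_mul _ h, norm_one, Real.log_one, add_zero]

theorem dP_nonneg (h₁ : IsUnit S₁.det) (h₂ : IsUnit S₂.det) : 0 ≤ dP S₁ S₂ := by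
  rw [dP_eq_log_norm_add_log_norm]
  exact log_norm_add_log_norm_nonneg (inv_mul_mul_inv_mul_cancel h₁ h₂)

theorem log_norm_inv_mul_le (h₁ : IsUnit S₁.det) (h₂ : IsUnit S₂.det) (h₃ : IsUnit S₃.det) :
    Real.log ‖S₁⁻¹ * S₃‖ ≤ Real.log ‖S₁⁻¹ * S₂‖ + Real.log ‖S₂⁻¹ * S₃‖ := by
  have hfactor : S₁⁻¹ * S₂ * (S₂⁻¹ * S₃) = S₁⁻¹ * S₃ := by
    rw [mul_assoc, mul_nonsing_inv_cancel_left _ _ h₂]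
  rw [← hfactor]
  exact log_norm_mul_le (hfactor ▸ left_ne_zero_of_mul_eq_one (inv_mul_mul_inv_mul_cancel h₁ h₃))

theorem dP_le_add (h₁ : IsUnit S₁.det) (h₂ : IsUnit S₂.det) (h₃ : IsUnit S₃.det) :
    dP S₁ S₃ ≤ dP S₁ S₂ + dP S₂ S₃ := by
  simp only [dP_eq_log_norm_add_log_norm]
  linarith [log_norm_inv_mul_le h₁ h₂ h₃, log_norm_inv_mul_le h₃ h₂ h₁]

theorem eq_of_dP_eq_zero (h₁ : memP n S₁) (h₂ : memP n S₂) (h : dP S₁ S₂ = 0) : S₁ = S₂ := by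
  rw [dP_eq_log_norm_add_log_norm] at h
  have hnorm := norm_mul_norm_le_one_of_log_norm_add_log_norm_nonpos
    (inv_mul_mul_inv_mul_cancel h₁.isUnit_det h₂.isUnit_det) h.le
  have hdet : ‖(S₁⁻¹ * S₂).det‖ = 1 := by
    rw [det_mul, det_nonsing_inv, h₁.det_eq_one, h₂.det_eq_one]
    simp
  exact h₁.posDef.eq_of_inv_mul_mem_unitaryGroup h₂.posDef.posSemidef
    (mem_unitaryGroup_of_l2_opNorm_mul_le_one
      (inv_mul_mul_inv_mul_cancel h₂.isUnit_det h₁.isUnit_det) hnorm hdet)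

end dP

theorem dP_is_metric (n : ℕ) (hn : 1 ≤ n) :
    (∀ S₁ S₂, memP n S₁ → memP n S₂ → 0 ≤ dP S₁ S₂) ∧
    (∀ S₁ S₂, memP n S₁ → memP n S₂ → dP S₁ S₂ = dP S₂ S₁) ∧
    (∀ S₁ S₂, memP n S₁ → memP n S₂ → (dP S₁ S₂ = 0 ↔ S₁ = S₂)) ∧
    (∀ S₁ S₂ S₃, memP n S₁ → memP n S₂ → memP n S₃ →
      dP S₁ S₃ ≤ dP S₁ S₂ + dP S₂ S₃) := by
  have : NeZero n := ⟨by omega⟩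
  refine ⟨fun S₁ S₂ h₁ h₂ => dP_nonneg h₁.isUnit_det h₂.isUnit_det,
    fun S₁ S₂ _ _ => dP_comm S₁ S₂,
    fun S₁ S₂ h₁ h₂ => ⟨eq_of_dP_eq_zero h₁ h₂, ?_⟩,
    fun S₁ S₂ S₃ h₁ h₂ h₃ => dP_le_add h₁.isUnit_det h₂.isUnit_det h₃.isUnit_det⟩
  rintro rfl
  exact dP_self h₁.isUnit_det
end

section
/- Let X be a proper metric space (closed balls are compact) which is geodesic (for all x, y ∈ X there is an isometric embedding γ : [0, dist(x,y)] → X with γ(0) = x and γ(dist(x,y)) = y). Let Γ be a group acting on X by isometries, and let p₀ ∈ X. Assume: (i) the action is cocompact, i.e. there is a compact set D ⊆ X with X = ⋃_{γ ∈ Γ} γ·D; (ii) for every r > 0 the set {γ ∈ Γ : dist(p₀, γ·p₀) ≤ r} is finite; (iii) the stabiliser of p₀ in Γ is trivial. Then there exist a finite subset S of Γ generating Γ and a constant C ≥ 1 such that for all γ ∈ Γ: (1/C)·dist(p₀, γ·p₀) ≤ ℓ_S(γ) ≤ C·dist(p₀, γ·p₀) whenever γ ≠ 1, where ℓ_S(γ)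 is the word length of γ with respect to S. In other words, the geometric distance function and the word distance function on Γ are Lipschitz equivalent. -/
section WordLength

variable {G : Type*} [Group G] {S : Set G} {g : G}

theorem wordLength_le_length {l : List G} (hl : ∀ x ∈ l, x ∈ S ∪ S⁻¹) (hprod : l.prod = g) :
    wordLength S g ≤ l.length :=
  Nat.sInf_le ⟨l, hl, rfl, hprod⟩

theorem exists_list_length_eq_wordLength (hg : g ∈ Subgroup.closure S) :
    ∃ l : List G, (∀ x ∈ l, x ∈ S ∪ S⁻¹) ∧ l.length = wordLength S g ∧ l.prod = g := by
  rw [← Subgroup.mem_toSubmonoid, Subgroup.closure_toSubmonoid] at hg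
  obtain ⟨l, hl, hprod⟩ := Submonoid.exists_list_of_mem_closure hg
  exact Nat.sInf_mem (s := {n | ∃ l : List G, (∀ x ∈ l, x ∈ S ∪ S⁻¹) ∧ l.length = n ∧ l.prod = g})
    ⟨l.length, l, hl, rfl, hprod⟩

end WordLength

def IsGeodesicSpace (X : Type*) [MetricSpace X] : Prop :=
  ∀ x y : X, ∃ γ : ℝ → X, γ 0 = x ∧ γ (dist x y) = y ∧
    ∀ s ∈ Set.Icc (0 : ℝ) (dist x y), ∀ t ∈ Set.Icc (0 : ℝ) (dist x y),
      dist (γ s) (γ t) = |s - t|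

theorem IsGeodesicSpace.exists_dist_eq_sub {X : Type*} [MetricSpace X] (hX : IsGeodesicSpace X)
    (x y : X) {t : ℝ} (ht₀ : 0 ≤ t) (ht : t ≤ dist x y) :
    ∃ z, dist x z = t ∧ dist z y = dist x y - t := by
  obtain ⟨γ, hγ₀, hγ₁, hiso⟩ := hX x y
  have h₀ : (0 : ℝ) ∈ Set.Icc 0 (dist x y) := ⟨le_rfl, dist_nonneg⟩
  have h₁ : dist x y ∈ Set.Icc 0 (dist x y) := ⟨dist_nonneg, le_rfl⟩
  have ht' : t ∈ Set.Icc 0 (dist x y) := ⟨ht₀, ht⟩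
  refine ⟨γ t, ?_, ?_⟩
  · rw [← hγ₀, hiso 0 h₀ t ht', zero_sub, abs_neg, abs_of_nonneg ht₀]
  · rw [← hγ₁, hiso t ht' _ h₁, hγ₁, abs_of_nonpos (by linarith)]
    ring

theorem exists_nonneg_forall_exists_dist_smul_le {X Γ : Type*} [MetricSpace X] [SMul Γ X]
    [IsIsometricSMul Γ X] {D : Set X} (hD : Bornology.IsBounded D)
    (hcov : ∀ x : X, ∃ γ : Γ, ∃ d ∈ D, x = γ • d) (p : X) :
    ∃ R, 0 ≤ R ∧ ∀ x : X, ∃ γ : Γ, dist x (γ • p) ≤ R := by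
  obtain ⟨r, hr⟩ := hD.subset_closedBall p
  refine ⟨max r 0, le_max_right r 0, fun x => ?_⟩
  obtain ⟨γ, d, hd, rfl⟩ := hcov x
  exact ⟨γ, (dist_smul γ d p).trans_le ((hr hd).trans (le_max_left r 0))⟩

theorem exists_pos_le_dist_smul {X Γ : Type*} [MetricSpace X] [One Γ] [SMul Γ X] (p : X)
    {r : ℝ} (hr : 0 < r)
    (hfin : {γ : Γ | dist p (γ • p) ≤ r}.Finite) (hfree : ∀ γ : Γ, γ • p = p → γ = 1) :
    ∃ ε > 0, ∀ γ : Γ, γ ≠ 1 → ε ≤ dist p (γ • p) := by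
  set F := {γ : Γ | dist p (γ • p) ≤ r} \ {1}
  rcases F.eq_empty_or_nonempty with hF | hF
  · refine ⟨r, hr, fun γ hγ => le_of_not_ge fun h => ?_⟩
    exact (Set.eq_empty_iff_forall_notMem.1 hF γ) ⟨h, hγ⟩
  obtain ⟨γ₀, ⟨-, hγ₀⟩, hmin⟩ := Set.exists_min_image F (fun γ => dist p (γ • p)) hfin.sdiff hF
  refine ⟨min r (dist p (γ₀ • p)), lt_min hr (dist_pos.2 fun h => hγ₀ (hfree γ₀ h.symm)),
    fun γ hγ => ?_⟩
  by_cases h : dist p (γ • p) ≤ r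
  · exact (min_le_right _ _).trans (hmin γ ⟨h, hγ⟩)
  · exact (min_le_left _ _).trans (le_of_not_ge h)

section OrbitMap

variable {X Γ : Type*} [MetricSpace X] [Group Γ] [MulAction Γ X] [IsIsometricSMul Γ X] (p : X)

theorem dist_smul_smul_eq_dist_inv_mul_smul (γ δ : Γ) :
    dist (γ • p) (δ • p) = dist p ((γ⁻¹ * δ) • p) := by
  rw [← dist_smul γ p ((γ⁻¹ * δ) • p), smul_smul, mul_inv_cancel_left]

theorem dist_inv_smul_eq (γ : Γ) : dist p (γ⁻¹ • p) = dist p (γ • p) := by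
  rw [← dist_smul γ, smul_inv_smul, dist_comm]

theorem dist_list_prod_smul_le {K : ℝ} (l : List Γ) (hl : ∀ x ∈ l, dist p (x • p) ≤ K) :
    dist p (l.prod • p) ≤ K * l.length := by
  induction l with
  | nil => simp
  | cons a l ih =>
    have ha := hl a List.mem_cons_self
    have hl' := ih fun x hx => hl x (List.mem_cons_of_mem a hx)
    calc dist p ((a :: l).prod • p)
        ≤ dist p (a • p) + dist (a • p) (a • l.prod • p) := by
          rw [List.prod_cons, mul_smul]; exact dist_triangle _ _ _
      _ ≤ K * ((a :: l).length : ℕ) := by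
          rw [dist_smul, List.length_cons, Nat.cast_succ]; linarith

theorem dist_smul_le_mul_wordLength {S : Set Γ} {K : ℝ} (hS : ∀ s ∈ S, dist p (s • p) ≤ K)
    {γ : Γ} (hγ : γ ∈ Subgroup.closure S) :
    dist p (γ • p) ≤ K * wordLength S γ := by
  obtain ⟨l, hl, hlen, rfl⟩ := exists_list_length_eq_wordLength hγ
  rw [← hlen]
  refine dist_list_prod_smul_le p l fun x hx => ?_
  rcases hl x hx with hx | hx
  · exact hS x hx
  · simpa only [dist_inv_smul_eq] using hS x⁻¹ hx

theorem exists_dist_smul_le_sub_one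
    (hgeo : IsGeodesicSpace X) {R : ℝ} (hnear : ∀ x : X, ∃ γ : Γ, dist x (γ • p) ≤ R)
    {γ : Γ} (hγ : 2 * R + 1 < dist p (γ • p)) :
    ∃ γ' : Γ, dist p (γ' • p) ≤ dist p (γ • p) - 1 ∧ dist p ((γ'⁻¹ * γ) • p) ≤ 2 * R + 1 := by
  have hR : 0 ≤ R := by obtain ⟨_, h⟩ := hnear p; exact dist_nonneg.trans h
  obtain ⟨z, hpz, hzγ⟩ := hgeo.exists_dist_eq_sub p (γ • p)
    (t := dist p (γ • p) - (R + 1)) (by linarith) (by linarith)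
  obtain ⟨γ', hγ'⟩ := hnear z
  refine ⟨γ', ?_, ?_⟩
  · linarith [dist_triangle p z (γ' • p)]
  · rw [← dist_smul_smul_eq_dist_inv_mul_smul]
    linarith [dist_triangle (γ' • p) z (γ • p), dist_comm z (γ' • p)]

theorem exists_list_prod_eq_of_dist_smul_le
    (hgeo : IsGeodesicSpace X) {R : ℝ} (hnear : ∀ x : X, ∃ γ : Γ, dist x (γ • p) ≤ R)
    (n : ℕ) {γ : Γ} (hγ : dist p (γ • p) ≤ n + 1) :
    ∃ l : List Γ, (∀ x ∈ l, dist p (x • p) ≤ 2 * R + 1) ∧ l.length ≤ n + 1 ∧ l.prod = γ := by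
  have hR : 0 ≤ R := by obtain ⟨_, h⟩ := hnear p; exact dist_nonneg.trans h
  induction n generalizing γ with
  | zero =>
    refine ⟨[γ], ?_, le_rfl, List.prod_singleton⟩
    simp only [List.mem_singleton, forall_eq]
    push_cast at hγ
    linarith
  | succ n ih =>
    by_cases hγS : dist p (γ • p) ≤ 2 * R + 1
    · exact ⟨[γ], by simpa using hγS, by simp, List.prod_singleton⟩
    obtain ⟨γ', hγ', hstep⟩ := exists_dist_smul_le_sub_one p hgeo hnear (not_le.1 hγS)
    obtain ⟨l, hl, hlen, rfl⟩ := ih (γ := γ') (by push_cast at hγ; linarith)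
    refine ⟨l ++ [l.prod⁻¹ * γ], ?_, by simpa using hlen, by simp⟩
    simpa [or_imp, forall_and] using ⟨hl, hstep⟩

theorem closure_setOf_dist_smul_le_eq_top
    (hgeo : IsGeodesicSpace X) {R : ℝ} (hnear : ∀ x : X, ∃ γ : Γ, dist x (γ • p) ≤ R) :
    Subgroup.closure {x : Γ | dist p (x • p) ≤ 2 * R + 1} = ⊤ := by
  refine eq_top_iff.2 fun γ _ => ?_
  obtain ⟨l, hl, -, rfl⟩ := exists_list_prod_eq_of_dist_smul_le p hgeo hnear
    ⌊dist p (γ • p)⌋₊ (Nat.lt_floor_add_one _).le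
  exact list_prod_mem fun x hx => Subgroup.subset_closure (hl x hx)

theorem wordLength_le_dist_smul_add_one
    (hgeo : IsGeodesicSpace X) {R : ℝ} (hnear : ∀ x : X, ∃ γ : Γ, dist x (γ • p) ≤ R) (γ : Γ) :
    (wordLength {x : Γ | dist p (x • p) ≤ 2 * R + 1} γ : ℝ) ≤ dist p (γ • p) + 1 := by
  obtain ⟨l, hl, hlen, hprod⟩ := exists_list_prod_eq_of_dist_smul_le p hgeo hnear
    ⌊dist p (γ • p)⌋₊ (Nat.lt_floor_add_one _).le
  calc (wordLength {x : Γ | dist p (x • p) ≤ 2 * R + 1} γ : ℝ)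
      ≤ l.length := by exact_mod_cast wordLength_le_length (fun x hx => Or.inl (hl x hx)) hprod
    _ ≤ ⌊dist p (γ • p)⌋₊ + 1 := by exact_mod_cast hlen
    _ ≤ dist p (γ • p) + 1 := by gcongr; exact Nat.floor_le dist_nonneg

end OrbitMap

theorem word_equiv_geometric_of_cocompact_general
    {X : Type*} [MetricSpace X]
    (hgeo : ∀ x y : X, ∃ γ : ℝ → X, γ 0 = x ∧ γ (dist x y) = y ∧
      ∀ s ∈ Set.Icc (0 : ℝ) (dist x y), ∀ t ∈ Set.Icc (0 : ℝ) (dist x y),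
        dist (γ s) (γ t) = |s - t|)
    {Γ : Type*} [Group Γ] [MulAction Γ X]
    (hisom : ∀ (γ : Γ) (x y : X), dist (γ • x) (γ • y) = dist x y)
    (p₀ : X)
    (hcocompact : ∃ D : Set X, IsCompact D ∧ ∀ x : X, ∃ γ : Γ, ∃ d ∈ D, x = γ • d)
    (hdiscrete : ∀ r : ℝ, 0 < r → {γ : Γ | dist p₀ (γ • p₀) ≤ r}.Finite)
    (hfree : ∀ γ : Γ, γ • p₀ = p₀ → γ = 1) :
    ∃ S : Set Γ, S.Finite ∧ Subgroup.closure S = ⊤ ∧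
      ∃ C : ℝ, 1 ≤ C ∧ ∀ γ : Γ, γ ≠ 1 →
        (1 / C) * dist p₀ (γ • p₀) ≤ (wordLength S γ : ℝ) ∧
        (wordLength S γ : ℝ) ≤ C * dist p₀ (γ • p₀) := by
  have : IsIsometricSMul Γ X := ⟨fun γ => Isometry.of_dist_eq (hisom γ)⟩
  obtain ⟨D, hD, hcov⟩ := hcocompact
  obtain ⟨R, hR, hnear⟩ := exists_nonneg_forall_exists_dist_smul_le hD.isBounded hcov p₀
  obtain ⟨ε, hε, hεle⟩ := exists_pos_le_dist_smul p₀ one_pos (hdiscrete 1 one_pos) hfree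
  set S := {x : Γ | dist p₀ (x • p₀) ≤ 2 * R + 1}
  have hS : Subgroup.closure S = ⊤ := closure_setOf_dist_smul_le_eq_top p₀ hgeo hnear
  set C := max (2 * R + 1) (1 + 1 / ε)
  have hC : 1 ≤ C := le_max_of_le_left (by linarith)
  refine ⟨S, hdiscrete _ (by linarith), hS, C, hC, fun γ hγ => ⟨?_, ?_⟩⟩
  · rw [one_div_mul_eq_div, div_le_iff₀ (by linarith)]
    calc dist p₀ (γ • p₀) ≤ (2 * R + 1) * wordLength S γ :=
          dist_smul_le_mul_wordLength p₀ (fun _ hs => hs) (hS ▸ Subgroup.mem_top γ)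
      _ ≤ wordLength S γ * C := by rw [mul_comm]; gcongr; exact le_max_left _ _
  · calc (wordLength S γ : ℝ) ≤ dist p₀ (γ • p₀) + 1 :=
          wordLength_le_dist_smul_add_one p₀ hgeo hnear γ
      _ ≤ (1 + 1 / ε) * dist p₀ (γ • p₀) := by
          rw [add_mul, one_mul, one_div_mul_eq_div]
          linarith [(one_le_div hε).2 (hεle γ hγ)]
      _ ≤ C * dist p₀ (γ • p₀) := by gcongr; exact le_max_right _ _

theorem word_equiv_geometric_of_cocompact
    {X : Type*} [MetricSpace X] [ProperSpace X]
    (hgeo : ∀ x y : X, ∃ γ : ℝ → X, γ 0 = x ∧ γ (dist x y) = y ∧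
      ∀ s ∈ Set.Icc (0 : ℝ) (dist x y), ∀ t ∈ Set.Icc (0 : ℝ) (dist x y),
        dist (γ s) (γ t) = |s - t|)
    {Γ : Type*} [Group Γ] [MulAction Γ X]
    (hisom : ∀ (γ : Γ) (x y : X), dist (γ • x) (γ • y) = dist x y)
    (p₀ : X)
    (hcocompact : ∃ D : Set X, IsCompact D ∧ ∀ x : X, ∃ γ : Γ, ∃ d ∈ D, x = γ • d)
    (hdiscrete : ∀ r : ℝ, 0 < r → {γ : Γ | dist p₀ (γ • p₀) ≤ r}.Finite)
    (hfree : ∀ γ : Γ, γ • p₀ = p₀ → γ = 1) :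
    ∃ S : Set Γ, S.Finite ∧ Subgroup.closure S = ⊤ ∧
      ∃ C : ℝ, 1 ≤ C ∧ ∀ γ : Γ, γ ≠ 1 →
        (1 / C) * dist p₀ (γ • p₀) ≤ (wordLength S γ : ℝ) ∧
        (wordLength S γ : ℝ) ≤ C * dist p₀ (γ • p₀) :=
  word_equiv_geometric_of_cocompact_general hgeo hisom p₀ hcocompact hdiscrete hfree
end

section
/- Let n ≥ 1, equip ℝ^{n+1} with the Lorentzian inner product x ∘ y = −x₀y₀ + x₁y₁ + ⋯ + x_ny_n, let Hⁿ = {x : x ∘ x = −1, x₀ > 0}, and let d_H(x,y) = arccosh(−x ∘ y). Let a < b be real numbers and α : [a,b] → Hⁿ a map. Then the following are equivalent: (1) α is a geodesic curve, i.e. d_H(α(s), α(t)) = |s − t| for all s, t ∈ [a,b]; (2) there exist Lorentz orthonormal vectors x, y ∈ ℝ^{n+1} (meaning x ∘ x = −1, x ∘ y = 0, y ∘ y = 1) with x₀ > 0 such that α(t) = cosh(t − a)·x + sinh(t − a)·y for all t ∈ [a,b]. -/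
/-- The Lorentzian inner product `x ∘ y = -x₀y₀ + x₁y₁ + ⋯`. -/
noncomputable def lorentzInner {m : ℕ} [NeZero m] (x y : Fin m → ℝ) : ℝ :=
  (∑ i, x i * y i) - 2 * (x 0 * y 0)

/-- The hyperboloid model `Hⁿ ⊆ ℝ^{n+1}`. -/
def hyperboloid (n : ℕ) : Set (Fin (n + 1) → ℝ) :=
  {x | lorentzInner x x = -1 ∧ 0 < x 0}

/-- The inverse hyperbolic cosine. -/
noncomputable def arcosh (x : ℝ) : ℝ := Real.log (x + Real.sqrt (x ^ 2 - 1))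

/-- The hyperbolic distance on the hyperboloid model. -/
noncomputable def dH {n : ℕ} (x y : Fin (n + 1) → ℝ) : ℝ :=
  arcosh (-lorentzInner x y)

/-!
A geodesic has Gram function `α s ∘ α t = -cosh (s - t)`, since `cosh ∘ arcosh = id` on `[1, ∞)`
and `-x ∘ y ≥ 1` on the hyperboloid (reverse Cauchy–Schwarz). Put `x = α a` and let `y` be the
normalised component of `α b` Lorentz-orthogonal to `x`. Then `α t` has the same inner products
with `x`, `y` and itself as `cosh (t - a) x + sinh (t - a) y`, so their difference is null and
orthogonal to the timelike vector `x`; it vanishes because `x^⊥` is spacelike. Conversely, such a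
curve has Gram function `-cosh (s - t)` by the subtraction formula for `cosh`.
-/

open Set

section LorentzInner

variable {m : ℕ} [NeZero m]

lemma lorentzInner_comm (x y : Fin m → ℝ) : lorentzInner x y = lorentzInner y x := by
  simp only [lorentzInner, mul_comm]

lemma lorentzInner_add_left (x y z : Fin m → ℝ) :
    lorentzInner (x + y) z = lorentzInner x z + lorentzInner y z := by
  simp only [lorentzInner, Pi.add_apply, add_mul, Finset.sum_add_distrib]
  ring

lemma lorentzInner_sub_left (x y z : Fin m → ℝ) :
    lorentzInner (x - y) z = lorentzInner x z - lorentzInner y z := by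
  simp only [lorentzInner, Pi.sub_apply, sub_mul, Finset.sum_sub_distrib]
  ring

lemma lorentzInner_smul_left (c : ℝ) (x y : Fin m → ℝ) :
    lorentzInner (c • x) y = c * lorentzInner x y := by
  simp only [lorentzInner, Pi.smul_apply, smul_eq_mul, mul_assoc, ← Finset.mul_sum]
  ring

lemma lorentzInner_add_right (x y z : Fin m → ℝ) :
    lorentzInner x (y + z) = lorentzInner x y + lorentzInner x z := by
  simp only [lorentzInner_comm x, lorentzInner_add_left]

lemma lorentzInner_sub_right (x y z : Fin m → ℝ) :
    lorentzInner x (y - z) = lorentzInner x y - lorentzInner x z := by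
  simp only [lorentzInner_comm x, lorentzInner_sub_left]

lemma lorentzInner_smul_right (c : ℝ) (x y : Fin m → ℝ) :
    lorentzInner x (c • y) = c * lorentzInner x y := by
  simp only [lorentzInner_comm x, lorentzInner_smul_left]

end LorentzInner

section Hyperboloid

variable {n : ℕ}

lemma lorentzInner_eq_sum_succ_sub (x y : Fin (n + 1) → ℝ) :
    lorentzInner x y = ∑ i : Fin n, x i.succ * y i.succ - x 0 * y 0 := by
  simp only [lorentzInner, Fin.sum_univ_succ]
  ring

lemma one_le_neg_lorentzInner {x y : Fin (n + 1) → ℝ} (hx : x ∈ hyperboloid n)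
    (hy : y ∈ hyperboloid n) : 1 ≤ -lorentzInner x y := by
  obtain ⟨hxx, hx0⟩ := hx
  obtain ⟨hyy, hy0⟩ := hy
  rw [lorentzInner_eq_sum_succ_sub] at hxx hyy ⊢
  have hcs := Finset.sum_mul_sq_le_sq_mul_sq Finset.univ (fun i : Fin n => x i.succ)
    (fun i => y i.succ)
  simp only [← sq] at hxx hyy hcs
  set p := ∑ i : Fin n, x i.succ * y i.succ
  have hx1 : 1 ≤ x 0 ^ 2 := by nlinarith [show 0 ≤ ∑ i : Fin n, x i.succ ^ 2 by positivity]
  have hy1 : 1 ≤ y 0 ^ 2 := by nlinarith [show 0 ≤ ∑ i : Fin n, y i.succ ^ 2 by positivity]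
  have hxy : 1 ≤ x 0 * y 0 := by nlinarith [mul_le_mul hx1 hy1 zero_le_one (by linarith)]
  have hp : p ^ 2 ≤ (x 0 * y 0 - 1) ^ 2 := by nlinarith [sq_nonneg (x 0 - y 0)]
  linarith [le_of_sq_le_sq hp (by linarith)]

lemma eq_zero_of_lorentzInner_eq_zero {x v : Fin (n + 1) → ℝ} (hx : lorentzInner x x < 0)
    (hxv : lorentzInner x v = 0) (hv : lorentzInner v v = 0) : v = 0 := by
  rw [lorentzInner_eq_sum_succ_sub] at hx hxv hv
  have hcs := Finset.sum_mul_sq_le_sq_mul_sq Finset.univ (fun i : Fin n => x i.succ)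
    (fun i => v i.succ)
  simp only [← sq] at hx hv hcs
  rw [sub_eq_zero.1 hxv, sub_eq_zero.1 hv] at hcs
  have hv0 : v 0 = 0 := by
    by_contra h
    have : 0 < v 0 ^ 2 := by positivity
    nlinarith [mul_lt_mul_of_pos_right (sub_neg.1 hx) this]
  have hvs : ∀ i ∈ Finset.univ, v (Fin.succ i) ^ 2 = 0 := by
    refine (Finset.sum_eq_zero_iff_of_nonneg fun (i : Fin n) _ => sq_nonneg (v i.succ)).1 ?_
    rw [hv0] at hv
    linarith
  funext i
  exact Fin.cases hv0 (fun j => pow_eq_zero_iff two_ne_zero |>.1 (hvs j (Finset.mem_univ j))) i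

lemma eq_cosh_smul_add_sinh_smul_of_lorentzInner {x y z : Fin (n + 1) → ℝ} {r : ℝ}
    (hxx : lorentzInner x x = -1) (hxy : lorentzInner x y = 0) (hyy : lorentzInner y y = 1)
    (hzz : lorentzInner z z = -1) (hzx : lorentzInner z x = -Real.cosh r)
    (hzy : lorentzInner z y = Real.sinh r) :
    z = Real.cosh r • x + Real.sinh r • y := by
  have hxz : lorentzInner x z = -Real.cosh r := by rw [lorentzInner_comm, hzx]
  have hyz : lorentzInner y z = Real.sinh r := by rw [lorentzInner_comm, hzy]
  have hyx : lorentzInner y x = 0 := by rw [lorentzInner_comm, hxy]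
  set v := z - (Real.cosh r • x + Real.sinh r • y) with hv
  have hxv : lorentzInner x v = 0 := by
    simp only [hv, lorentzInner_sub_right, lorentzInner_add_right, lorentzInner_smul_right, hxz,
      hxx, hxy]
    ring
  have hvv : lorentzInner v v = 0 := by
    simp only [hv, lorentzInner_sub_right, lorentzInner_add_right, lorentzInner_smul_right,
      lorentzInner_sub_left, lorentzInner_add_left, lorentzInner_smul_left, hzz, hzx, hzy, hxz,
      hyz, hxx, hxy, hyx, hyy]
    linear_combination Real.cosh_sq_sub_sinh_sq r
  exact sub_eq_zero.1 (eq_zero_of_lorentzInner_eq_zero (by rw [hxx]; norm_num) hxv hvv)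

lemma lorentzInner_cosh_smul_add_sinh_smul {x y : Fin (n + 1) → ℝ}
    (hxx : lorentzInner x x = -1) (hxy : lorentzInner x y = 0) (hyy : lorentzInner y y = 1)
    (s t : ℝ) :
    lorentzInner (Real.cosh s • x + Real.sinh s • y) (Real.cosh t • x + Real.sinh t • y) =
      -Real.cosh (s - t) := by
  simp only [lorentzInner_add_right, lorentzInner_smul_right, lorentzInner_add_left,
    lorentzInner_smul_left, hxx, hyy, hxy, lorentzInner_comm y x, Real.cosh_sub]
  ring

lemma dH_eq_abs_iff {x y : Fin (n + 1) → ℝ} (hx : x ∈ hyperboloid n) (hy : y ∈ hyperboloid n)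
    (r : ℝ) : dH x y = |r| ↔ lorentzInner x y = -Real.cosh r := by
  have hd : dH x y = Real.arcosh (-lorentzInner x y) := rfl
  constructor
  · intro h
    have hcosh := Real.cosh_arcosh (one_le_neg_lorentzInner hx hy)
    rw [← hd, h, Real.cosh_abs] at hcosh
    linarith
  · intro h
    rw [hd, h, neg_neg, ← Real.cosh_abs, Real.arcosh_cosh (abs_nonneg r)]

lemma exists_eq_cosh_smul_add_sinh_smul {α : ℝ → Fin (n + 1) → ℝ} {a b : ℝ} (hab : a < b)
    (hα : ∀ s ∈ Icc a b, ∀ t ∈ Icc a b, lorentzInner (α s) (α t) = -Real.cosh (s - t)) :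
    ∃ y, lorentzInner (α a) y = 0 ∧ lorentzInner y y = 1 ∧
      ∀ t ∈ Icc a b, α t = Real.cosh (t - a) • α a + Real.sinh (t - a) • y := by
  have ha : a ∈ Icc a b := left_mem_Icc.2 hab.le
  have hb : b ∈ Icc a b := right_mem_Icc.2 hab.le
  have hsinh : Real.sinh (b - a) ≠ 0 := (Real.sinh_pos_iff.2 (sub_pos.2 hab)).ne'
  have hunit : ∀ t ∈ Icc a b, lorentzInner (α t) (α t) = -1 := fun t ht => by
    simpa using hα t ht t ht
  obtain ⟨y, hy⟩ : ∃ y, y = (Real.sinh (b - a))⁻¹ • (α b - Real.cosh (b - a) • α a) := ⟨_, rfl⟩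
  have hαy : ∀ t ∈ Icc a b, lorentzInner (α t) y = Real.sinh (t - a) := by
    intro t ht
    rw [hy, lorentzInner_smul_right, lorentzInner_sub_right, lorentzInner_smul_right,
      hα t ht b hb, hα t ht a ha, show t - b = (t - a) - (b - a) by ring, Real.cosh_sub]
    field_simp
    ring
  have hxy : lorentzInner (α a) y = 0 := by simpa using hαy a ha
  have hyy : lorentzInner y y = 1 := by
    nth_rewrite 1 [hy]
    rw [lorentzInner_smul_left, lorentzInner_sub_left, lorentzInner_smul_left, hαy b hb, hxy,
      mul_zero, sub_zero, inv_mul_cancel₀ hsinh]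
  exact ⟨y, hxy, hyy, fun t ht => eq_cosh_smul_add_sinh_smul_of_lorentzInner (hunit a ha) hxy
    hyy (hunit t ht) (hα t ht a ha) (hαy t ht)⟩

end Hyperboloid

theorem geodesic_curve_characterisation_general (n : ℕ) (a b : ℝ) (hab : a < b)
    (α : ℝ → Fin (n + 1) → ℝ) (hα : ∀ t ∈ Set.Icc a b, α t ∈ hyperboloid n) :
    (∀ s ∈ Set.Icc a b, ∀ t ∈ Set.Icc a b, dH (α s) (α t) = |s - t|) ↔
    (∃ x y : Fin (n + 1) → ℝ,
      lorentzInner x x = -1 ∧ lorentzInner x y = 0 ∧ lorentzInner y y = 1 ∧ 0 < x 0 ∧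
      ∀ t ∈ Set.Icc a b,
        α t = fun i => Real.cosh (t - a) * x i + Real.sinh (t - a) * y i) := by
  have hdist : ∀ s ∈ Icc a b, ∀ t ∈ Icc a b,
      dH (α s) (α t) = |s - t| ↔ lorentzInner (α s) (α t) = -Real.cosh (s - t) :=
    fun s hs t ht => dH_eq_abs_iff (hα s hs) (hα t ht) (s - t)
  constructor
  · intro hgeod
    obtain ⟨y, hxy, hyy, hform⟩ := exists_eq_cosh_smul_add_sinh_smul hab
      fun s hs t ht => (hdist s hs t ht).1 (hgeod s hs t ht)
    have ha : a ∈ Icc a b := left_mem_Icc.2 hab.le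
    exact ⟨α a, y, (hα a ha).1, hxy, hyy, (hα a ha).2, hform⟩
  · rintro ⟨x, y, hxx, hxy, hyy, -, hform⟩ s hs t ht
    have hform' : ∀ t ∈ Icc a b, α t = Real.cosh (t - a) • x + Real.sinh (t - a) • y := hform
    rw [hdist s hs t ht, hform' s hs, hform' t ht,
      lorentzInner_cosh_smul_add_sinh_smul hxx hxy hyy, sub_sub_sub_cancel_right]

theorem geodesic_curve_characterisation (n : ℕ) (hn : 1 ≤ n) (a b : ℝ) (hab : a < b)
    (α : ℝ → Fin (n + 1) → ℝ) (hα : ∀ t ∈ Set.Icc a b, α t ∈ hyperboloid n) :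
    (∀ s ∈ Set.Icc a b, ∀ t ∈ Set.Icc a b, dH (α s) (α t) = |s - t|) ↔
    (∃ x y : Fin (n + 1) → ℝ,
      lorentzInner x x = -1 ∧ lorentzInner x y = 0 ∧ lorentzInner y y = 1 ∧ 0 < x 0 ∧
      ∀ t ∈ Set.Icc a b,
        α t = fun i => Real.cosh (t - a) * x i + Real.sinh (t - a) * y i) :=
  geodesic_curve_characterisation_general n a b hab α hα
end

section
/- Let t > 1 and let p₀ = t·i ∈ ℍ. Then the Dirichlet domain of the modular group with centre p₀ equals the interior of the standard fundamental triangle: {z ∈ ℍ : dist_ℍ(z, p₀) < dist_ℍ(z, γ·p₀) for every γ ∈ SL(2,ℤ) with γ ≠ I and γ ≠ −I} = {z ∈ ℍ : |Re z| < 1/2 and |z| > 1}. -/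
/-!
Since `SL(2, ℤ)` acts by isometries, `dist z (γ • p₀) = dist (γ⁻¹ • z) p₀`, and for `p₀ = t i`
the inequality `dist z p₀ < dist z (γ • p₀)` with `γ⁻¹ = [[a, b], [c, d]]` becomes
`|z|² + t² < |a z + b|² + t² |c z + d|²`. For `γ = T⁻¹, T, S` this says `Re z > -1/2`,
`Re z < 1/2` and `(t² - 1)(|z|² - 1) > 0`. Conversely, if `|Re z| ≤ 1/2` then
`|p z + q|² ≥ 1 + p² (|z|² - 1)` for every integer pair `(p, q) ≠ 0`; applied to `(a, b)` and
`(c, d)` this gives the inequality as soon as `c ≠ 0` (using `t > 1`), and for `c = 0` we have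
`a = d = ±1`, `b ≠ 0`, so the inequality reduces to `2 a b Re z + b² > 0`.
-/

open scoped MatrixGroups Modular
open UpperHalfPlane Complex ModularGroup

lemma one_le_sq_sub_abs_mul_add_sq {p q : ℤ} (h : p ≠ 0 ∨ q ≠ 0) :
    1 ≤ p ^ 2 - |p * q| + q ^ 2 := by
  rw [abs_mul, ← sq_abs p, ← sq_abs q]
  rcases lt_trichotomy |p| |q| with hlt | heq | hgt
  · nlinarith [abs_nonneg p]
  · have : 0 < |p| := by rcases h with h | h; exacts [abs_pos.mpr h, heq ▸ abs_pos.mpr h]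
    nlinarith
  · nlinarith [abs_nonneg q]

lemma normSq_intCast_mul_add (z : ℂ) (p q : ℤ) :
    normSq (p * z + q) = p ^ 2 * normSq z + 2 * p * q * z.re + q ^ 2 := by
  simp only [normSq_apply, add_re, mul_re, intCast_re, intCast_im, zero_mul, sub_zero, add_im,
    mul_im, add_zero]
  ring

lemma one_add_sq_mul_sub_one_le_normSq {z : ℂ} (hz : |z.re| ≤ 1 / 2) {p q : ℤ}
    (hpq : p ≠ 0 ∨ q ≠ 0) : 1 + p ^ 2 * (normSq z - 1) ≤ normSq (p * z + q) := by
  have hint : (1 : ℝ) ≤ p ^ 2 - |(p : ℝ) * q| + q ^ 2 := by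
    exact_mod_cast one_le_sq_sub_abs_mul_add_sq hpq
  have hcross : |2 * (p * q) * z.re| ≤ |(p : ℝ) * q| := by
    rw [abs_mul, abs_mul, abs_two]
    nlinarith [abs_nonneg ((p : ℝ) * q)]
  rw [normSq_intCast_mul_add]
  linarith [neg_abs_le (2 * (p * q) * z.re)]

lemma normSq_add_sq_lt_of_abs_re_lt {z : ℂ} (hre : |z.re| < 1 / 2) (hnorm : 1 < normSq z)
    {t : ℝ} (ht : 1 < t) {a b c d : ℤ} (hdet : a * d - b * c = 1) (hbc : b ≠ 0 ∨ c ≠ 0) :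
    normSq z + t ^ 2 < normSq (a * z + b) + t ^ 2 * normSq (c * z + d) := by
  rcases eq_or_ne c 0 with rfl | hc
  · have hb : (1 : ℝ) ≤ |(b : ℝ)| := by
      exact_mod_cast Int.one_le_abs (hbc.resolve_right (not_not.2 rfl))
    have hcross : |2 * b * z.re| < b ^ 2 := by
      rw [abs_mul, abs_mul, abs_two, ← sq_abs (b : ℝ)]
      nlinarith
    rw [normSq_intCast_mul_add, normSq_intCast_mul_add]
    obtain ⟨rfl, rfl⟩ | ⟨rfl, rfl⟩ :=
      Int.eq_one_or_neg_one_of_mul_eq_one' (by linarith : a * d = 1)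
    · push_cast; linarith [neg_abs_le (2 * b * z.re)]
    · push_cast; linarith [le_abs_self (2 * b * z.re)]
  · have had : a ≠ 0 ∨ b ≠ 0 := by
      by_contra! h; rw [h.1, h.2] at hdet; simp at hdet
    have hA := one_add_sq_mul_sub_one_le_normSq hre.le had
    have hC := one_add_sq_mul_sub_one_le_normSq hre.le (q := d) (Or.inl hc)
    have hc2 : (1 : ℝ) ≤ c ^ 2 := by
      rw [one_le_sq_iff_one_le_abs]; exact_mod_cast Int.one_le_abs hc
    have htc : 1 < t ^ 2 * c ^ 2 := by nlinarith
    nlinarith [mul_le_mul_of_nonneg_left hC (sq_nonneg t),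
      mul_pos (sub_pos.2 hnorm) (sub_pos.2 htc),
      mul_nonneg (sub_pos.2 hnorm).le (sq_nonneg (a : ℝ))]

lemma SL2Z_det_eq_one (g : SL(2, ℤ)) : g 0 0 * g 1 1 - g 0 1 * g 1 0 = 1 :=
  (Matrix.det_fin_two _).symm.trans g.det_coe

lemma SL2Z_apply_zero_one_ne_zero_or_apply_one_zero_ne_zero {g : SL(2, ℤ)} (h₁ : g ≠ 1)
    (h₂ : g ≠ -1) : g 0 1 ≠ 0 ∨ g 1 0 ≠ 0 := by
  by_contra! hbc
  have had : g 0 0 * g 1 1 = 1 := by simpa [hbc] using SL2Z_det_eq_one g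
  obtain ⟨ha, hd⟩ | ⟨ha, hd⟩ := Int.eq_one_or_neg_one_of_mul_eq_one' had
  · exact h₁ (by ext i j; fin_cases i <;> fin_cases j <;> simp [ha, hd, hbc])
  · exact h₂ (by ext i j; fin_cases i <;> fin_cases j <;> simp [ha, hd, hbc])

lemma mem_fdo_iff_abs_re_lt_and_one_lt_norm (z : ℍ) :
    z ∈ 𝒟ᵒ ↔ |(z : ℂ).re| < 1 / 2 ∧ 1 < ‖(z : ℂ)‖ := by
  rw [fdo, Set.mem_ofPred_eq, and_comm, normSq_eq_norm_sq, one_lt_sq_iff₀ (norm_nonneg _)]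
  rfl

lemma cosh_dist_of_coe_eq_mul_I {t : ℝ} {p : ℍ} (hp : (p : ℂ) = t * Complex.I) (w : ℍ) :
    Real.cosh (dist w p) = (normSq w + t ^ 2) / w.im / (2 * t) := by
  have hre : p.re = 0 := by simp [← coe_re, hp]
  have him : p.im = t := by simp [← coe_im, hp]
  rw [cosh_dist', hre, him, normSq_apply]
  simp only [coe_re, coe_im]
  ring

lemma dist_lt_dist_iff_of_coe_eq_mul_I {t : ℝ} {p : ℍ} (hp : (p : ℂ) = t * Complex.I)
    (z w : ℍ) : dist z p < dist w p ↔ (normSq z + t ^ 2) / z.im < (normSq w + t ^ 2) / w.im := by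
  have ht : 0 < t := by simpa [← coe_im, hp] using p.im_pos
  rw [← abs_of_nonneg (dist_nonneg (x := z)), ← abs_of_nonneg (dist_nonneg (x := w)),
    ← Real.cosh_lt_cosh, cosh_dist_of_coe_eq_mul_I hp, cosh_dist_of_coe_eq_mul_I hp,
    div_lt_div_iff_of_pos_right (by positivity)]

lemma dist_smul_smul_SL2Z (g : SL(2, ℤ)) (z w : ℍ) : dist (g • z) (g • w) = dist z w :=
  dist_smul (Matrix.SpecialLinearGroup.map (Int.castRingHom ℝ) g) z w

lemma normSq_smul_add_div_im (g : SL(2, ℤ)) (z : ℍ) (s : ℝ) :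
    (normSq (g • z : ℍ) + s) / (g • z).im =
      (normSq (g 0 0 * z + g 0 1) + s * normSq (g 1 0 * z + g 1 1)) / z.im := by
  have hden : normSq (g 1 0 * z + g 1 1) ≠ 0 := by
    rw [← denom_apply]; exact normSq_denom_ne_zero _ z.im_ne_zero
  rw [coe_specialLinearGroup_apply, ModularGroup.im_smul_eq_div_normSq, denom_apply, normSq_div]
  simp only [algebraMap_int_eq, eq_intCast, ofReal_intCast]
  rw [div_add' _ _ _ hden, div_div_div_cancel_right₀ hden]

lemma dist_lt_dist_inv_smul_iff {t : ℝ} {p : ℍ} (hp : (p : ℂ) = t * Complex.I) (g : SL(2, ℤ))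
    (z : ℍ) : dist z p < dist z (g⁻¹ • p) ↔
      normSq z + t ^ 2 < normSq (g 0 0 * z + g 0 1) + t ^ 2 * normSq (g 1 0 * z + g 1 1) := by
  rw [← dist_smul_smul_SL2Z g z (g⁻¹ • p), smul_inv_smul, dist_lt_dist_iff_of_coe_eq_mul_I hp,
    normSq_smul_add_div_im, div_lt_div_iff_of_pos_right z.im_pos]

lemma mem_fdo_of_dist_lt_dist_T_S_smul {t : ℝ} (ht : 1 < t) {p z : ℍ}
    (hp : (p : ℂ) = t * Complex.I) (hT : dist z p < dist z (T • p))
    (hT' : dist z p < dist z (T⁻¹ • p)) (hS : dist z p < dist z (S • p)) : z ∈ 𝒟ᵒ := by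
  rw [← inv_inv T, dist_lt_dist_inv_smul_iff hp] at hT
  rw [dist_lt_dist_inv_smul_iff hp] at hT'
  rw [← inv_inv S, dist_lt_dist_inv_smul_iff hp, S_inv] at hS
  have hre₁ : z.re ^ 2 < (z.re - 1) ^ 2 := by simpa [normSq_apply, sq, sub_eq_add_neg] using hT
  have hre₂ : z.re ^ 2 < (z.re + 1) ^ 2 := by simpa [normSq_apply, sq] using hT'
  have hnorm : normSq (z : ℂ) + t ^ 2 < 1 + t ^ 2 * normSq (z : ℂ) := by simpa using hS
  have ht2 : 1 < t ^ 2 := by nlinarith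
  exact ⟨by nlinarith, abs_lt.mpr ⟨by nlinarith, by nlinarith⟩⟩

lemma dist_lt_dist_smul_of_mem_fdo {t : ℝ} (ht : 1 < t) {p z : ℍ} (hp : (p : ℂ) = t * Complex.I)
    (hz : z ∈ 𝒟ᵒ) {γ : SL(2, ℤ)} (hγ₁ : γ ≠ 1) (hγ₂ : γ ≠ -1) : dist z p < dist z (γ • p) := by
  have hγ₁' : γ⁻¹ ≠ 1 := inv_ne_one.mpr hγ₁
  have hγ₂' : γ⁻¹ ≠ -1 := fun h => hγ₂ (by rw [inv_eq_iff_eq_inv.mp h]; decide)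
  rw [← inv_inv γ, dist_lt_dist_inv_smul_iff hp]
  exact normSq_add_sq_lt_of_abs_re_lt hz.2 hz.1 ht (SL2Z_det_eq_one γ⁻¹)
    (SL2Z_apply_zero_one_ne_zero_or_apply_one_zero_ne_zero hγ₁' hγ₂')

theorem dirichlet_domain_eq_fundamental_triangle (t : ℝ) (ht : 1 < t)
    (p₀ : UpperHalfPlane) (hp₀ : (p₀ : ℂ) = t * Complex.I) :
    {z : UpperHalfPlane | ∀ γ : SL(2, ℤ),
        (γ : Matrix (Fin 2) (Fin 2) ℤ) ≠ 1 → (γ : Matrix (Fin 2) (Fin 2) ℤ) ≠ -1 →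
        dist z p₀ < dist z (γ • p₀)} =
    {z : UpperHalfPlane | |(z : ℂ).re| < 1 / 2 ∧ 1 < ‖(z : ℂ)‖} := by
  ext z
  rw [Set.mem_ofPred_eq, Set.mem_ofPred_eq, ← mem_fdo_iff_abs_re_lt_and_one_lt_norm]
  constructor
  · intro h
    exact mem_fdo_of_dist_lt_dist_T_S_smul ht hp₀ (h T (by decide) (by decide))
      (h T⁻¹ (by rw [coe_T_inv]; decide) (by rw [coe_T_inv]; decide)) (h S (by decide) (by decide))
  · intro hz γ h₁ h₂
    exact dist_lt_dist_smul_of_mem_fdo ht hp₀ hz (fun h => h₁ (by simp [h]))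
      (fun h => h₂ (by simp [h]))
end
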